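/- arXiv:1406.3740 — 9 statements merged into one kernel-verified Lean document; each statement's English description precedes it below -/
import Mathlib

section
/- Let A and E be n×n real matrices and let ‖·‖ denote the operator norm induced by any ℓ^p vector norm (1 ≤ p ≤ ∞). Then |det(A+E) − det(A)| ≤ n · max{‖A‖, ‖A+E‖}^(n−1) · ‖E‖. -/
/-!
Replacing the rows of `A` one at a time by those of `A + E` telescopes `det (A + E) - det A` into
`n` determinants, each with one row of `E` and all other rows taken from `A` or `A + E`.
Hadamard's inequality bounds each of them by `max ‖A‖ ‖A + E‖ ^ (n - 1) * ‖E‖`, since for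
`2 ≤ p` every row, and for `p ≤ 2` every column, of a matrix has Euclidean length at most its
`ℓ^p` operator norm: apply the matrix to its own row, resp. to a basis vector, and compare the
`ℓ^2` and `ℓ^p` norms. For `p ≤ 2` the row argument is applied to the transposes.
-/

noncomputable section

open Matrix

/-- The operator norm of an `n × n` real matrix induced by the `ℓ^p` norm on `ℝ^n`. -/
def lpOpNorm (p : ENNReal) [Fact (1 ≤ p)] {n : ℕ} (A : Matrix (Fin n) (Fin n) ℝ) : ℝ :=
  ‖LinearMap.toContinuousLinearMap
    ((((PiLp.continuousLinearEquiv p ℝ (fun _ : Fin n => ℝ)).toLinearEquiv).symm.toLinearMap.comp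
        A.mulVecLin).comp
      ((PiLp.continuousLinearEquiv p ℝ (fun _ : Fin n => ℝ)).toLinearEquiv).toLinearMap)‖

open WithLp

theorem PiLp.norm_toLp_le_norm_toLp_of_le {ι : Type*} [Fintype ι] {β : ι → Type*}
    [∀ i, SeminormedAddCommGroup (β i)] {p q : ENNReal} [Fact (1 ≤ p)] (hpq : p ≤ q)
    (x : ∀ i, β i) : ‖toLp q x‖ ≤ ‖toLp p x‖ := by
  set s := ‖toLp p x‖ with hs_def
  have hx : ∀ i, ‖x i‖ ≤ s := PiLp.norm_apply_le (toLp p x)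
  rcases eq_or_ne q ⊤ with rfl | hq
  · rw [PiLp.norm_eq_ciSup]
    exact Real.iSup_le hx (norm_nonneg _)
  have hp0 : 0 < p.toReal := ENNReal.toReal_pos
    (zero_lt_one.trans_le (Fact.out : (1 : ENNReal) ≤ p)).ne' (ne_top_of_le_ne_top hq hpq)
  have hpq' : p.toReal ≤ q.toReal := ENNReal.toReal_mono hq hpq
  have hq0 : 0 < q.toReal := hp0.trans_le hpq'
  have hs : ∑ i, ‖x i‖ ^ p.toReal = s ^ p.toReal := by
    rw [hs_def, PiLp.norm_eq_sum hp0, one_div, Real.rpow_inv_rpow (by positivity) hp0.ne']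
  have hsum : ∑ i, ‖x i‖ ^ q.toReal ≤ s ^ q.toReal := calc
    ∑ i, ‖x i‖ ^ q.toReal = ∑ i, ‖x i‖ ^ p.toReal * ‖x i‖ ^ (q.toReal - p.toReal) := by
        refine Finset.sum_congr rfl fun i _ => ?_
        rw [← Real.rpow_add' (norm_nonneg _) (by linarith), add_sub_cancel]
    _ ≤ ∑ i, ‖x i‖ ^ p.toReal * s ^ (q.toReal - p.toReal) := by
        gcongr with i
        exact hx i
    _ = s ^ q.toReal := by
        rw [← Finset.sum_mul, hs, ← Real.rpow_add' (norm_nonneg _) (by linarith), add_sub_cancel]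
  rw [PiLp.norm_eq_sum hq0, one_div]
  calc (∑ i, ‖x i‖ ^ q.toReal) ^ q.toReal⁻¹ ≤ (s ^ q.toReal) ^ q.toReal⁻¹ := by gcongr
    _ = s := Real.rpow_rpow_inv (norm_nonneg _) hq0.ne'

namespace Matrix

variable {R : Type*} {n : ℕ}

theorem abs_det_le_prod_norm_row (A : Matrix (Fin n) (Fin n) ℝ) :
    |A.det| ≤ ∏ i, ‖toLp 2 (A i)‖ := by
  have : Fact (Module.finrank ℝ (EuclideanSpace ℝ (Fin n)) = n) := ⟨finrank_euclideanSpace_fin⟩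
  let b := EuclideanSpace.basisFun (Fin n) ℝ
  have hdet : b.toBasis.det (fun i => toLp 2 (A i)) = A.det := by
    rw [Module.Basis.det_apply, ← det_transpose]
    congr 1
  rw [← hdet, ← b.toBasis.orientation.volumeForm_robust' b]
  exact b.toBasis.orientation.abs_volumeForm_apply_le _

def rowInterp (A B : Matrix (Fin n) (Fin n) R) (k : ℕ) : Matrix (Fin n) (Fin n) R :=
  Matrix.of fun i => if (i : ℕ) < k then B i else A i

theorem rowInterp_succ (A B : Matrix (Fin n) (Fin n) R) (k : Fin n) :
    rowInterp A B (k + 1) = (rowInterp A B k).updateRow k (B k) := by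
  ext i j
  by_cases hik : i = k
  · subst hik
    simp [rowInterp]
  · have : (i : ℕ) ≠ k := Fin.val_ne_of_ne hik
    simp only [rowInterp, updateRow_ne hik, of_apply]
    split_ifs <;> first | rfl | omega

theorem det_sub_det_eq_sum_det_updateRow [CommRing R] (A B : Matrix (Fin n) (Fin n) R) :
    B.det - A.det = ∑ k : Fin n, ((rowInterp A B k).updateRow k (B k - A k)).det := by
  have hstep (k : Fin n) : ((rowInterp A B k).updateRow k (B k - A k)).det =
      (rowInterp A B (k + 1)).det - (rowInterp A B k).det := by
    have hrow : A k = rowInterp A B k k := (if_neg (lt_irrefl (k : ℕ))).symm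
    calc ((rowInterp A B k).updateRow k (B k - A k)).det
        = ((rowInterp A B k).updateRow k (A k + (B k - A k))).det -
            ((rowInterp A B k).updateRow k (A k)).det := by rw [det_updateRow_add]; ring
      _ = (rowInterp A B (k + 1)).det - (rowInterp A B k).det := by
        rw [add_sub_cancel, rowInterp_succ, hrow, updateRow_eq_self]
  have h0 : rowInterp A B 0 = A := by ext; simp [rowInterp]
  have hn : rowInterp A B n = B := by ext; simp [rowInterp]
  simp_rw [hstep]
  rw [Fin.sum_univ_eq_sum_range (fun k => (rowInterp A B (k + 1)).det - (rowInterp A B k).det),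
    Finset.sum_range_sub (fun k => (rowInterp A B k).det), h0, hn]

theorem abs_det_le_pow_mul_of_norm_row_le (M : Matrix (Fin n) (Fin n) ℝ) (k : Fin n) {K ε : ℝ}
    (hM : ∀ i ≠ k, ‖toLp 2 (M i)‖ ≤ K) (hk : ‖toLp 2 (M k)‖ ≤ ε) :
    |M.det| ≤ K ^ (n - 1) * ε := by
  have hrest : ∏ i ∈ Finset.univ.erase k, ‖toLp 2 (M i)‖ ≤ K ^ (n - 1) := calc
    ∏ i ∈ Finset.univ.erase k, ‖toLp 2 (M i)‖ ≤ ∏ _i ∈ Finset.univ.erase k, K :=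
        Finset.prod_le_prod (fun _ _ => norm_nonneg _) fun i hi =>
          hM i (Finset.ne_of_mem_erase hi)
    _ = K ^ (n - 1) := by simp
  calc |M.det| ≤ ∏ i, ‖toLp 2 (M i)‖ := abs_det_le_prod_norm_row M
    _ = (∏ i ∈ Finset.univ.erase k, ‖toLp 2 (M i)‖) * ‖toLp 2 (M k)‖ := by
      rw [← Finset.mul_prod_erase _ _ (Finset.mem_univ k), mul_comm]
    _ ≤ K ^ (n - 1) * ε :=
      mul_le_mul hrest hk (norm_nonneg _)
        ((Finset.prod_nonneg fun _ _ => norm_nonneg _).trans hrest)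

theorem abs_det_sub_det_le_of_norm_row_le (A B : Matrix (Fin n) (Fin n) ℝ) {K ε : ℝ}
    (hA : ∀ i, ‖toLp 2 (A i)‖ ≤ K) (hB : ∀ i, ‖toLp 2 (B i)‖ ≤ K)
    (hBA : ∀ i, ‖toLp 2 ((B - A) i)‖ ≤ ε) :
    |B.det - A.det| ≤ n * K ^ (n - 1) * ε := by
  have hinterp (k : ℕ) (i : Fin n) : ‖toLp 2 (rowInterp A B k i)‖ ≤ K := by
    change ‖toLp 2 (if (i : ℕ) < k then B i else A i)‖ ≤ K
    split_ifs
    exacts [hB i, hA i]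
  have hterm (k : Fin n) :
      |((rowInterp A B k).updateRow k (B k - A k)).det| ≤ K ^ (n - 1) * ε :=
    abs_det_le_pow_mul_of_norm_row_le _ k
      (fun i hi => by simpa only [updateRow_ne hi] using hinterp k i)
      (by rw [updateRow_self]; exact hBA k)
  rw [det_sub_det_eq_sum_det_updateRow]
  calc |∑ k : Fin n, ((rowInterp A B k).updateRow k (B k - A k)).det|
      ≤ ∑ k : Fin n, |((rowInterp A B k).updateRow k (B k - A k)).det| :=
        Finset.abs_sum_le_sum_abs _ _
    _ ≤ ∑ _k : Fin n, K ^ (n - 1) * ε := Finset.sum_le_sum fun k _ => hterm k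
    _ = n * K ^ (n - 1) * ε := by simp [mul_assoc]

end Matrix

section lpOpNorm

variable (p : ENNReal) [Fact (1 ≤ p)] {n : ℕ}

theorem norm_toLp_mulVec_le_lpOpNorm_mul (A : Matrix (Fin n) (Fin n) ℝ) (x : Fin n → ℝ) :
    ‖toLp p (A *ᵥ x)‖ ≤ lpOpNorm p A * ‖toLp p x‖ :=
  ContinuousLinearMap.le_opNorm
    (LinearMap.toContinuousLinearMap
      ((((PiLp.continuousLinearEquiv p ℝ (fun _ : Fin n => ℝ)).toLinearEquiv).symm.toLinearMap.comp
          A.mulVecLin).comp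
        ((PiLp.continuousLinearEquiv p ℝ (fun _ : Fin n => ℝ)).toLinearEquiv).toLinearMap))
    (toLp p x)

variable {p}

theorem norm_toLp_two_col_le_lpOpNorm (hp : p ≤ 2) (A : Matrix (Fin n) (Fin n) ℝ) (j : Fin n) :
    ‖toLp 2 (Aᵀ j)‖ ≤ lpOpNorm p A :=
  calc ‖toLp 2 (Aᵀ j)‖ ≤ ‖toLp p (Aᵀ j)‖ := PiLp.norm_toLp_le_norm_toLp_of_le hp _
    _ = ‖toLp p (A *ᵥ (Pi.single j 1 : Fin n → ℝ))‖ := by rw [mulVec_single_one]; rfl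
    _ ≤ lpOpNorm p A * ‖toLp p (Pi.single j 1 : Fin n → ℝ)‖ :=
        norm_toLp_mulVec_le_lpOpNorm_mul p A _
    _ = lpOpNorm p A := by rw [PiLp.toLp_single, PiLp.norm_single, norm_one, mul_one]

theorem norm_toLp_two_row_le_lpOpNorm (hp : 2 ≤ p) (A : Matrix (Fin n) (Fin n) ℝ) (i : Fin n) :
    ‖toLp 2 (A i)‖ ≤ lpOpNorm p A := by
  have : Fact ((1 : ENNReal) ≤ 2) := ⟨one_le_two⟩
  rcases (norm_nonneg (toLp 2 (A i))).eq_or_lt with h0 | hpos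
  · rw [← h0]; exact norm_nonneg _
  have hsq : ‖toLp 2 (A i)‖ * ‖toLp 2 (A i)‖ ≤ lpOpNorm p A * ‖toLp 2 (A i)‖ := calc
    ‖toLp 2 (A i)‖ * ‖toLp 2 (A i)‖ = (A *ᵥ A i) i := by
        rw [← sq, EuclideanSpace.norm_sq_eq]
        simp [mulVec, dotProduct, sq]
    _ ≤ ‖toLp p (A *ᵥ A i)‖ := (le_abs_self _).trans (PiLp.norm_apply_le (toLp p (A *ᵥ A i)) i)
    _ ≤ lpOpNorm p A * ‖toLp p (A i)‖ := norm_toLp_mulVec_le_lpOpNorm_mul p A _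
    _ ≤ lpOpNorm p A * ‖toLp 2 (A i)‖ := by
        gcongr
        · exact norm_nonneg _
        · exact PiLp.norm_toLp_le_norm_toLp_of_le hp _
  exact le_of_mul_le_mul_right hsq hpos

end lpOpNorm

/-- **Friedland's determinant perturbation bound.**  For `n × n` real matrices `A`
and `E`, and the operator norm induced by any `ℓ^p` norm (`1 ≤ p ≤ ∞`),
`|det(A+E) − det(A)| ≤ n · max{‖A‖_p, ‖A+E‖_p}^(n−1) · ‖E‖_p`. -/
theorem friedland_det_bound (p : ENNReal) [Fact (1 ≤ p)] {n : ℕ}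
    (A E : Matrix (Fin n) (Fin n) ℝ) :
    |(A + E).det - A.det| ≤
      n * max (lpOpNorm p A) (lpOpNorm p (A + E)) ^ (n - 1) * lpOpNorm p E := by
  rcases le_total 2 p with hp | hp
  · exact abs_det_sub_det_le_of_norm_row_le A (A + E)
      (fun i => (norm_toLp_two_row_le_lpOpNorm hp A i).trans (le_max_left _ _))
      (fun i => (norm_toLp_two_row_le_lpOpNorm hp (A + E) i).trans (le_max_right _ _))
      (fun i => by rw [add_sub_cancel_left]; exact norm_toLp_two_row_le_lpOpNorm hp E i)
  · rw [← det_transpose (A + E), ← det_transpose A]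
    exact abs_det_sub_det_le_of_norm_row_le Aᵀ (A + E)ᵀ
      (fun j => (norm_toLp_two_col_le_lpOpNorm hp A j).trans (le_max_left _ _))
      (fun j => (norm_toLp_two_col_le_lpOpNorm hp (A + E) j).trans (le_max_right _ _))
      (fun j => by
        rw [transpose_add, add_sub_cancel_left]; exact norm_toLp_two_col_le_lpOpNorm hp E j)

end
end

section
/- Let σ = {v_0, …, v_k} be a non-degenerate k-simplex in ℝ^n (k > 0), and let P be the n×k matrix whose i-th column is v_i − v_0. Then the smallest singular value of P satisfies σ_k(P) ≥ √k · Θ(σ) · L(σ), where Θ(σ) is the thickness of σ and L(σ) is its longest edge length. -/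
/-!
For a unit vector `x`, `P x = ∑ cᵢ vᵢ` with `c = (-∑ xⱼ, x₁, …, x_k)`, whose entries sum to
zero. Dividing by a nonzero `cᵢ` shows that `vᵢ - P x / cᵢ` lies in the affine hull of the facet
opposite `vᵢ`, so `‖P x‖ ≥ |cᵢ| aᵢ`. Some coordinate has `|xⱼ| ≥ 1 / √k`, which gives
`‖P x‖ ≥ (minᵢ aᵢ) / √k ≥ √k Θ(σ) L(σ)`.
-/

noncomputable section

open Metric

/-- The altitude of vertex `i` of the simplex with vertices `v`: the distance
from `v i` to the affine hull of the opposite facet. -/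
def altitude {m k : ℕ} (v : Fin (k + 1) → EuclideanSpace ℝ (Fin m)) (i : Fin (k + 1)) : ℝ :=
  Metric.infDist (v i) (affineSpan ℝ (v '' {j | j ≠ i}) : Set (EuclideanSpace ℝ (Fin m)))

/-- The longest edge length of the simplex with vertices `v`. -/
def longestEdge {m k : ℕ} (v : Fin (k + 1) → EuclideanSpace ℝ (Fin m)) : ℝ :=
  sSup {d : ℝ | ∃ i j, d = dist (v i) (v j)}

/-- The thickness of the simplex with vertices `v`. -/
def thickness {m k : ℕ} (v : Fin (k + 1) → EuclideanSpace ℝ (Fin m)) : ℝ :=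
  if k = 0 then 1 else (sInf (Set.range (altitude v))) / (k * longestEdge v)

/-- The `m × k` matrix whose `j`-th column is `v (j+1) - v 0`. -/
def edgeMat {m k : ℕ} (v : Fin (k + 1) → EuclideanSpace ℝ (Fin m)) :
    Matrix (Fin m) (Fin k) ℝ :=
  Matrix.of fun i j => (v j.succ - v 0) i

/-- The smallest singular value of a matrix: the infimum of `‖P x‖` over unit
vectors `x` (Euclidean norms). -/
def smallestSing {m k : ℕ} (P : Matrix (Fin m) (Fin k) ℝ) : ℝ :=
  sInf { r : ℝ | ∃ x : EuclideanSpace ℝ (Fin k), ‖x‖ = 1 ∧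
    r = ‖(EuclideanSpace.equiv (Fin m) ℝ).symm (P.mulVec (EuclideanSpace.equiv (Fin k) ℝ x))‖ }

open Finset

lemma abs_mul_infDist_le_norm_sum_smul {ι V : Type*} [Fintype ι] [NormedAddCommGroup V]
    [NormedSpace ℝ V] (p : ι → V) {c : ι → ℝ} (hc : ∑ j, c j = 0) (i : ι) :
    |c i| * infDist (p i) (affineSpan ℝ (p '' {j | j ≠ i})) ≤ ‖∑ j, c j • p j‖ := by
  classical
  by_cases hci : c i = 0
  · simp [hci]
  set w : ι → ℝ := Pi.single i 1 - (c i)⁻¹ • c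
  have hw : ∑ j, w j = 1 := by
    simp [w, sum_sub_distrib, ← mul_sum, hc]
  have hmem : univ.affineCombination ℝ p w ∈ affineSpan ℝ (p '' {j | j ≠ i}) :=
    affineCombination_mem_affineSpan_image hw
      (fun j _ hj => by simp only [Set.mem_ofPred_eq, not_not] at hj; simp [w, hj, hci]) p
  have hcomb : univ.affineCombination ℝ p w = p i - (c i)⁻¹ • ∑ j, c j • p j := by
    rw [univ.affineCombination_eq_linear_combination p w hw]
    simp [w, sub_smul, sum_sub_distrib, smul_sum, smul_smul]
  calc |c i| * infDist (p i) (affineSpan ℝ (p '' {j | j ≠ i}))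
      ≤ |c i| * dist (p i) (univ.affineCombination ℝ p w) := by
        gcongr; exact infDist_le_dist_of_mem hmem
    _ = ‖∑ j, c j • p j‖ := by
        rw [hcomb, dist_eq_norm, sub_sub_cancel, norm_smul, norm_inv, Real.norm_eq_abs,
          mul_inv_cancel_left₀ (abs_ne_zero.mpr hci)]

lemma EuclideanSpace.exists_norm_le_sqrt_card_mul_norm_apply {ι 𝕜 : Type*} [Fintype ι]
    [Nonempty ι] [RCLike 𝕜] (x : EuclideanSpace 𝕜 ι) :
    ∃ j, ‖x‖ ≤ √(Fintype.card ι) * ‖x j‖ := by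
  let b := EuclideanSpace.basisFun ι 𝕜
  obtain ⟨j, hj⟩ := exists_eq_ciSup_of_finite (f := fun i => ‖inner 𝕜 (b i) x‖)
  have h := b.norm_le_card_mul_iSup_norm_inner x
  rw [← hj] at h
  exact ⟨j, by simpa [b] using h⟩

lemma le_smallestSing {m k : ℕ} (hk : 0 < k) {P : Matrix (Fin m) (Fin k) ℝ} {r : ℝ}
    (h : ∀ x : EuclideanSpace ℝ (Fin k), ‖x‖ = 1 → r ≤ ‖P.toEuclideanLin x‖) :
    r ≤ smallestSing P := by
  refine le_csInf ⟨_, EuclideanSpace.single ⟨0, hk⟩ 1, by simp, rfl⟩ ?_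
  rintro _ ⟨x, hx, rfl⟩
  -- `P.toEuclideanLin x` is definitionally the expression in `smallestSing`
  exact h x hx

section Simplex

variable {m k : ℕ} (v : Fin (k + 1) → EuclideanSpace ℝ (Fin m))

lemma edgeMat_toEuclideanLin (x : EuclideanSpace ℝ (Fin k)) :
    (edgeMat v).toEuclideanLin x =
      ∑ i, (Fin.cons (-∑ j, x j) x : Fin (k + 1) → ℝ) i • v i := by
  rw [Fin.sum_univ_succ]
  ext i
  simp only [edgeMat, PiLp.sub_apply, Matrix.toLpLin_apply, Matrix.mulVec, dotProduct,
    Matrix.of_apply, mul_comm, mul_sub, sum_sub_distrib, Fin.cons_zero, neg_smul, Fin.cons_succ,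
    PiLp.add_apply, PiLp.neg_apply, PiLp.smul_apply, smul_eq_mul, sum_mul, WithLp.ofLp_sum,
    WithLp.ofLp_smul, Finset.sum_apply, Pi.smul_apply]
  ring

lemma sInf_altitude_nonneg : 0 ≤ sInf (Set.range (altitude v)) :=
  Real.sInf_nonneg fun _ ⟨_, hd⟩ => hd ▸ infDist_nonneg

lemma sqrt_mul_thickness_mul_longestEdge_le (hk : 0 < k) :
    √k * thickness v * longestEdge v ≤ sInf (Set.range (altitude v)) / √k := by
  rw [thickness, if_neg hk.ne']
  calc √k * (sInf (Set.range (altitude v)) / (k * longestEdge v)) * longestEdge v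
      = sInf (Set.range (altitude v)) / √k * (longestEdge v / longestEdge v) := by
        field_simp
        rw [Real.sq_sqrt (Nat.cast_nonneg k)]
        ring
    _ ≤ sInf (Set.range (altitude v)) / √k :=
        mul_le_of_le_one_right (div_nonneg (sInf_altitude_nonneg v) (Real.sqrt_nonneg _))
          (div_self_le_one _)

lemma norm_mul_sInf_altitude_le_sqrt_mul_norm_edgeMat_toEuclideanLin (hk : 0 < k)
    (x : EuclideanSpace ℝ (Fin k)) :
    ‖x‖ * sInf (Set.range (altitude v)) ≤ √k * ‖(edgeMat v).toEuclideanLin x‖ := by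
  have : Nonempty (Fin k) := ⟨⟨0, hk⟩⟩
  obtain ⟨j, hj⟩ := EuclideanSpace.exists_norm_le_sqrt_card_mul_norm_apply x
  rw [Fintype.card_fin] at hj
  have hsum : ∑ i, (Fin.cons (-∑ j, x j) x : Fin (k + 1) → ℝ) i = 0 := by
    simp [Fin.sum_univ_succ]
  have hfacet := abs_mul_infDist_le_norm_sum_smul v hsum j.succ
  rw [Fin.cons_succ] at hfacet
  rw [edgeMat_toEuclideanLin]
  calc ‖x‖ * sInf (Set.range (altitude v)) ≤ √k * |x j| * altitude v j.succ := by
        gcongr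
        · exact sInf_altitude_nonneg v
        · exact hj
        · exact csInf_le (Set.finite_range _).bddBelow ⟨j.succ, rfl⟩
    _ ≤ _ := by rw [mul_assoc]; gcongr; exact hfacet

end Simplex

theorem smallestSing_ge_sqrt_mul_thickness_mul_longestEdge_general
    {n k : ℕ} (hk : 0 < k) (v : Fin (k + 1) → EuclideanSpace ℝ (Fin n)) :
    smallestSing (edgeMat v) ≥ Real.sqrt k * thickness v * longestEdge v := by
  refine (sqrt_mul_thickness_mul_longestEdge_le v hk).trans (le_smallestSing hk fun x hx => ?_)
  rw [div_le_iff₀' (by positivity)]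
  simpa [hx] using norm_mul_sInf_altitude_le_sqrt_mul_norm_edgeMat_toEuclideanLin v hk x

/-- **Thickness and singular value.**  For a non-degenerate `k`-simplex in `ℝ^n`
(`k > 0`), the smallest singular value of the matrix of edge vectors satisfies
`σ_k(P) ≥ √k · Θ(σ) · L(σ)`. -/
theorem smallestSing_ge_sqrt_mul_thickness_mul_longestEdge
    {n k : ℕ} (hk : 0 < k) (v : Fin (k + 1) → EuclideanSpace ℝ (Fin n))
    (hv : AffineIndependent ℝ v) :
    smallestSing (edgeMat v) ≥ Real.sqrt k * thickness v * longestEdge v :=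
  smallestSing_ge_sqrt_mul_thickness_mul_longestEdge_general hk v

end
end

section
/- Let σ = {v_0, …, v_k} be a non-degenerate k-simplex in ℝ^n with associated matrix P (columns v_i − v_0). Then the i-th row of the pseudo-inverse P⁺ = (PᵀP)⁻¹Pᵀ is wᵢᵀ where w_i is orthogonal to the affine hull of the facet opposite v_i and ‖w_i‖ = 1/a_i, the reciprocal of the altitude of v_i. -/
noncomputable section

open Metric Matrix

/-!
Write `u a = v (a + 1) - v 0` for the edge vectors, the columns of `P`. Since `Pᵀ P` is the Gram
matrix of the `u a`, the rows `w i` of `P⁺` form the basis of `span (range u)` dual to `u`: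
`⟪w i, u j⟫ = δ i j`. So `w i` is orthogonal to the edges `u j`, `j ≠ i`, which span the direction
of the facet opposite `v (i + 1)`. As `w i` also lies in the span of all edges, the point
`v (i + 1) - w i / ‖w i‖²` lies on that facet; it is the foot of the altitude, whose length is
therefore `‖w i / ‖w i‖²‖ = 1 / ‖w i‖`.
-/

open scoped InnerProductSpace

section InnerProductSpace

variable {E ι : Type*} [NormedAddCommGroup E] [InnerProductSpace ℝ E]

theorem mem_orthogonal_span_iff {s : Set E} {w : E} :
    w ∈ (Submodule.span ℝ s)ᗮ ↔ ∀ x ∈ s, ⟪w, x⟫_ℝ = 0 := by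
  refine ⟨fun h x hx => (Submodule.mem_orthogonal' _ w).mp h x (Submodule.subset_span hx),
    fun h => (Submodule.mem_orthogonal' _ w).mpr fun z hz => ?_⟩
  have hle : Submodule.span ℝ s ≤ (ℝ ∙ w)ᗮ := Submodule.span_le.mpr fun x hx =>
    Submodule.mem_orthogonal_singleton_iff_inner_right.mpr (h x hx)
  exact Submodule.mem_orthogonal_singleton_iff_inner_right.mp (hle hz)

theorem norm_inv_norm_sq_smul (w : E) : ‖(‖w‖ ^ 2)⁻¹ • w‖ = ‖w‖⁻¹ := by
  rcases eq_or_ne ‖w‖ 0 with h | h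
  · simp [h]
  · rw [norm_smul, norm_inv, norm_pow, norm_norm]
    field_simp

theorem sub_inv_norm_sq_smul_mem_span_compl {u : ι → E} {w : E} {i : ι}
    (hw : w ∈ Submodule.span ℝ (Set.range u)) (hwi : ⟪w, u i⟫_ℝ = 1)
    (hw_perp : w ∈ (Submodule.span ℝ (u '' {a | a ≠ i}))ᗮ) :
    u i - (‖w‖ ^ 2)⁻¹ • w ∈ Submodule.span ℝ (u '' {a | a ≠ i}) := by
  rw [← Set.insert_image_compl_eq_range _ i, Submodule.mem_span_insert] at hw
  obtain ⟨t, d, hd, hw_eq⟩ := hw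
  have hwd : ⟪w, d⟫_ℝ = 0 := (Submodule.mem_orthogonal' _ w).mp hw_perp d hd
  have ht : ‖w‖ ^ 2 = t := by
    rw [← real_inner_self_eq_norm_sq]
    nth_rewrite 2 [hw_eq]
    rw [inner_add_right, real_inner_smul_right, hwi, hwd]
    ring
  have ht0 : t ≠ 0 := by
    rintro rfl
    rw [sq_eq_zero_iff, norm_eq_zero] at ht
    simp [ht] at hwi
  have hd_eq : u i - t⁻¹ • w = -t⁻¹ • d := by
    rw [hw_eq, smul_add, smul_smul, inv_mul_cancel₀ ht0, one_smul, neg_smul]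
    abel
  rw [ht, hd_eq]
  exact Submodule.smul_mem _ _ hd

theorem infDist_eq_dist_of_vsub_mem_orthogonal {P : Type*} [MetricSpace P]
    [NormedAddTorsor E P] {s : AffineSubspace ℝ P} [s.direction.HasOrthogonalProjection]
    {p q : P} (hq : q ∈ s) (hpq : p -ᵥ q ∈ s.directionᗮ) :
    Metric.infDist p s = dist p q := by
  have : Nonempty s := ⟨⟨q, hq⟩⟩
  rw [← EuclideanGeometry.dist_orthogonalProjection_eq_infDist,
    EuclideanGeometry.coe_orthogonalProjection_eq_iff_mem.mpr ⟨hq, hpq⟩]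

variable [Fintype ι] [DecidableEq ι]

def dualFamily (u : ι → E) (i : ι) : E := ∑ a, (gram ℝ u)⁻¹ i a • u a

theorem dualFamily_mem_span (u : ι → E) (i : ι) :
    dualFamily u i ∈ Submodule.span ℝ (Set.range u) :=
  Submodule.sum_mem _ fun a _ => Submodule.smul_mem _ _ (Submodule.subset_span ⟨a, rfl⟩)

theorem inner_dualFamily {u : ι → E} (hu : LinearIndependent ℝ u) (i j : ι) :
    ⟪dualFamily u i, u j⟫_ℝ = if i = j then 1 else 0 := by
  have hG : IsUnit (gram ℝ u).det :=
    isUnit_iff_ne_zero.mpr (det_gram_ne_zero_iff_linearIndependent.mpr hu)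
  calc ⟪dualFamily u i, u j⟫_ℝ = ((gram ℝ u)⁻¹ * gram ℝ u) i j := by
        simp [dualFamily, sum_inner, real_inner_smul_left, mul_apply]
    _ = if i = j then 1 else 0 := by rw [nonsing_inv_mul _ hG, one_apply]

end InnerProductSpace

section PseudoInverse

variable {m n : Type*} [Fintype m]

theorem transpose_mul_self_eq_gram (P : Matrix m n ℝ) :
    Pᵀ * P = gram ℝ (fun j => WithLp.toLp 2 (Pᵀ j)) := by
  ext a b
  simp [mul_apply, EuclideanSpace.inner_eq_star_dotProduct, dotProduct, mul_comm]

theorem toLp_pseudoInverse_row_eq_dualFamily [Fintype n] [DecidableEq n] (P : Matrix m n ℝ)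
    (i : n) :
    WithLp.toLp 2 (((Pᵀ * P)⁻¹ * Pᵀ) i) = dualFamily (fun j => WithLp.toLp 2 (Pᵀ j)) i := by
  rw [dualFamily, ← transpose_mul_self_eq_gram]
  ext a
  simp [mul_apply]

end PseudoInverse

section Simplex

variable {k V P : Type*} [Ring k] [AddCommGroup V] [Module k V] [AddTorsor V P]

theorem AffineIndependent.linearIndependent_succ_vsub_zero {n : ℕ} {v : Fin (n + 1) → P}
    (hv : AffineIndependent k v) : LinearIndependent k fun a : Fin n => v a.succ -ᵥ v 0 := by
  rw [affineIndependent_iff_linearIndependent_vsub k v 0] at hv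
  exact hv.comp (fun a => ⟨a.succ, Fin.succ_ne_zero a⟩)
    fun a b hab => Fin.succ_injective _ (congrArg Subtype.val hab)

theorem vectorSpan_image_ne_succ {n : ℕ} (v : Fin (n + 1) → P) (i : Fin n) :
    vectorSpan k (v '' {j | j ≠ i.succ}) =
      Submodule.span k ((fun a : Fin n => v a.succ -ᵥ v 0) '' {a | a ≠ i}) := by
  have h0 : v 0 ∈ v '' {j | j ≠ i.succ} := ⟨0, (Fin.succ_ne_zero i).symm, rfl⟩
  rw [vectorSpan_eq_span_vsub_set_right k h0]
  conv_rhs => rw [← Submodule.span_insert_zero]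
  congr 1
  ext x
  simp only [Set.image_image, Set.mem_image, Set.mem_insert_iff, Set.mem_ofPred_eq]
  constructor
  · rintro ⟨j, hj, rfl⟩
    cases j using Fin.cases with
    | zero => exact Or.inl (vsub_self _)
    | succ a => exact Or.inr ⟨a, fun h => hj (h ▸ rfl), rfl⟩
  · rintro (rfl | ⟨a, ha, rfl⟩)
    · exact ⟨0, (Fin.succ_ne_zero i).symm, vsub_self _⟩
    · exact ⟨a.succ, fun h => ha (Fin.succ_injective _ h), rfl⟩

end Simplex

theorem pseudoInverse_rows_general {n k : ℕ}
    (v : Fin (k + 1) → EuclideanSpace ℝ (Fin n)) (hv : AffineIndependent ℝ v)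
    (i : Fin k) :
    let P : Matrix (Fin n) (Fin k) ℝ := edgeMat v
    let w : EuclideanSpace ℝ (Fin n) :=
      (EuclideanSpace.equiv (Fin n) ℝ).symm (fun j => ((Pᵀ * P)⁻¹ * Pᵀ) i j)
    (∀ x ∈ (affineSpan ℝ (v '' {j | j ≠ i.succ}) : Set (EuclideanSpace ℝ (Fin n))),
      ∀ y ∈ (affineSpan ℝ (v '' {j | j ≠ i.succ}) : Set (EuclideanSpace ℝ (Fin n))),
        (inner ℝ w (x - y) : ℝ) = 0) ∧
    ‖w‖ = (altitude v i.succ)⁻¹ := by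
  intro P w
  set u : Fin k → EuclideanSpace ℝ (Fin n) := fun a => v a.succ -ᵥ v 0
  have hu : LinearIndependent ℝ u := hv.linearIndependent_succ_vsub_zero
  have hw : w = dualFamily u i := toLp_pseudoInverse_row_eq_dualFamily P i
  set F := affineSpan ℝ (v '' {j | j ≠ i.succ})
  have hdir : F.direction = Submodule.span ℝ (u '' {a | a ≠ i}) := by
    rw [direction_affineSpan, vectorSpan_image_ne_succ]
  have hw_perp : w ∈ (Submodule.span ℝ (u '' {a | a ≠ i}))ᗮ := by
    refine mem_orthogonal_span_iff.mpr ?_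
    rintro _ ⟨a, ha, rfl⟩
    rw [hw, inner_dualFamily hu, if_neg (Ne.symm ha)]
  refine ⟨fun x hx y hy => (Submodule.mem_orthogonal' _ w).mp (hdir ▸ hw_perp) _
    (AffineSubspace.vsub_mem_direction hx hy), ?_⟩
  have hfoot : v i.succ - (‖w‖ ^ 2)⁻¹ • w ∈ F := by
    have h := sub_inv_norm_sq_smul_mem_span_compl (hw ▸ dualFamily_mem_span u i)
      (by rw [hw, inner_dualFamily hu, if_pos rfl]) hw_perp
    have h0 : v 0 ∈ F := subset_affineSpan ℝ _ ⟨0, (Fin.succ_ne_zero i).symm, rfl⟩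
    convert AffineSubspace.vadd_mem_of_mem_direction (hdir ▸ h) h0 using 1
    simp only [u, vsub_eq_sub, vadd_eq_add]
    abel
  have hnormal : v i.succ -ᵥ (v i.succ - (‖w‖ ^ 2)⁻¹ • w) ∈ F.directionᗮ := by
    rw [vsub_eq_sub, sub_sub_cancel, hdir]
    exact Submodule.smul_mem _ _ hw_perp
  rw [altitude, infDist_eq_dist_of_vsub_mem_orthogonal hfoot hnormal, dist_eq_norm,
    sub_sub_cancel, norm_inv_norm_sq_smul, inv_inv]

/-- **Rows of the pseudo-inverse.** -/
theorem pseudoInverse_rows {n k : ℕ} (hk : 0 < k)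
    (v : Fin (k + 1) → EuclideanSpace ℝ (Fin n)) (hv : AffineIndependent ℝ v)
    (i : Fin k) :
    let P : Matrix (Fin n) (Fin k) ℝ := edgeMat v
    let w : EuclideanSpace ℝ (Fin n) :=
      (EuclideanSpace.equiv (Fin n) ℝ).symm (fun j => ((Pᵀ * P)⁻¹ * Pᵀ) i j)
    (∀ x ∈ (affineSpan ℝ (v '' {j | j ≠ i.succ}) : Set (EuclideanSpace ℝ (Fin n))),
      ∀ y ∈ (affineSpan ℝ (v '' {j | j ≠ i.succ}) : Set (EuclideanSpace ℝ (Fin n))),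
        (inner ℝ w (x - y) : ℝ) = 0) ∧
    ‖w‖ = (altitude v i.succ)⁻¹ :=
  pseudoInverse_rows_general v hv i

end
end

section
/- Let σ = {v_0, …, v_k} be a k-simplex in ℝ^n in which some vertex v_i with i ≠ 0 realises an altitude at least as small as the altitude of v_0 (i.e., a_i ≤ a_0). Then Θ(σ) ≥ σ_k(P) / (k · L(σ)), where P is the matrix of edge vectors v_i − v_0, σ_k(P) its smallest singular value, L(σ) the longest edge length, and Θ(σ) the thickness. -/
/-! For `i ≠ 0`, the facet opposite `v i` contains `v 0` and its direction is spanned by the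
columns of `P` other than the `i`-th, so for each point `p` of it `v i - p = P y` with `y i = 1`.
Hence `‖v i - p‖ ≥ σ_k(P) ‖y‖ ≥ σ_k(P)`, i.e. `a_i ≥ σ_k(P)`; the hypothesis `a_0 ≥ a_i` extends
this to the remaining altitude. -/

noncomputable section

open Metric Matrix

section SmallestSing

variable {m k : ℕ} (P : Matrix (Fin m) (Fin k) ℝ)

lemma smallestSing_nonneg : 0 ≤ smallestSing P :=
  Real.sInf_nonneg fun _ ⟨_, _, hr⟩ => hr ▸ norm_nonneg _

lemma smallestSing_le_norm_toEuclideanLin {x : EuclideanSpace ℝ (Fin k)} (hx : ‖x‖ = 1) :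
    smallestSing P ≤ ‖toEuclideanLin P x‖ :=
  csInf_le ⟨0, fun _ ⟨_, _, hr⟩ => hr ▸ norm_nonneg _⟩ ⟨x, hx, rfl⟩

lemma smallestSing_mul_norm_le (x : EuclideanSpace ℝ (Fin k)) :
    smallestSing P * ‖x‖ ≤ ‖toEuclideanLin P x‖ := by
  rcases eq_or_ne x 0 with rfl | hx
  · simp
  have hx₀ : 0 < ‖x‖ := norm_pos_iff.2 hx
  have hunit := smallestSing_le_norm_toEuclideanLin P (x := ‖x‖⁻¹ • x)
    (by rw [norm_smul, norm_inv, norm_norm, inv_mul_cancel₀ hx₀.ne'])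
  rwa [map_smul, norm_smul, norm_inv, norm_norm, le_inv_mul_iff₀ hx₀, mul_comm] at hunit

end SmallestSing

section Simplex

variable {n k : ℕ} (v : Fin (k + 1) → EuclideanSpace ℝ (Fin n))

lemma longestEdge_nonneg : 0 ≤ longestEdge v :=
  Real.sSup_nonneg fun _ ⟨_, _, hd⟩ => hd ▸ dist_nonneg

lemma toEuclideanLin_edgeMat_single (j : Fin k) :
    toEuclideanLin (edgeMat v) (EuclideanSpace.single j 1) = v j.succ - v 0 := by
  ext r
  simp [toLpLin_apply, edgeMat, mulVec_single]

lemma vectorSpan_facet_le_map_ker (i : Fin k) :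
    vectorSpan ℝ (v '' {j | j ≠ i.succ}) ≤
      (EuclideanSpace.proj (𝕜 := ℝ) i).toLinearMap.ker.map
        (toEuclideanLin (edgeMat v)) := by
  rw [vectorSpan_eq_span_vsub_set_right ℝ (Set.mem_image_of_mem v (Fin.succ_ne_zero i).symm),
    Submodule.span_le]
  rintro _ ⟨_, ⟨j, hj, rfl⟩, rfl⟩
  induction j using Fin.cases with
  | zero => simp only [vsub_self, SetLike.mem_coe, Submodule.zero_mem]
  | succ j =>
    refine ⟨EuclideanSpace.single j 1, ?_, toEuclideanLin_edgeMat_single v j⟩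
    simpa [PiLp.single_apply] using fun h => hj (congrArg Fin.succ h.symm)

lemma smallestSing_le_altitude_succ (i : Fin k) :
    smallestSing (edgeMat v) ≤ altitude v i.succ := by
  have hv₀ : v 0 ∈ affineSpan ℝ (v '' {j | j ≠ i.succ}) :=
    subset_affineSpan ℝ _ ⟨0, (Fin.succ_ne_zero i).symm, rfl⟩
  refine (le_infDist ⟨_, hv₀⟩).2 fun p hp => ?_
  have hdir : p -ᵥ v 0 ∈ vectorSpan ℝ (v '' {j | j ≠ i.succ}) := by
    rw [← direction_affineSpan]
    exact AffineSubspace.vsub_mem_direction hp hv₀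
  obtain ⟨w, hw, hpw⟩ := vectorSpan_facet_le_map_ker v i hdir
  have hwi : w i = 0 := hw
  set y := EuclideanSpace.single i (1 : ℝ) - w
  have hy : 1 ≤ ‖y‖ := by
    simpa [y, hwi] using PiLp.norm_apply_le y i
  calc smallestSing (edgeMat v)
      ≤ smallestSing (edgeMat v) * ‖y‖ := le_mul_of_one_le_right (smallestSing_nonneg _) hy
    _ ≤ ‖toEuclideanLin (edgeMat v) y‖ := smallestSing_mul_norm_le _ y
    _ = dist (v i.succ) p := by
      rw [map_sub, toEuclideanLin_edgeMat_single, hpw, vsub_eq_sub, sub_sub_sub_cancel_right,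
        dist_eq_norm]

end Simplex

/-- If some vertex other than `v 0` realises an altitude at least as small as that of
`v 0`, then the thickness is bounded below by `σ_k(P) / (k L(σ))`. -/
theorem thickness_ge_smallestSing_div {n k : ℕ} (hk : 0 < k)
    (v : Fin (k + 1) → EuclideanSpace ℝ (Fin n))
    (h : ∃ i : Fin (k + 1), i ≠ 0 ∧ altitude v i ≤ altitude v 0) :
    thickness v ≥ smallestSing (edgeMat v) / (k * longestEdge v) := by
  obtain ⟨_, hi, hle⟩ := h
  obtain ⟨i, rfl⟩ := Fin.exists_succ_eq.2 hi
  have hσ : ∀ j, smallestSing (edgeMat v) ≤ altitude v j :=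
    Fin.cases ((smallestSing_le_altitude_succ v i).trans hle) (smallestSing_le_altitude_succ v)
  rw [ge_iff_le, thickness, if_neg hk.ne']
  exact div_le_div_of_nonneg_right (le_csInf (Set.range_nonempty _) (Set.forall_mem_range.2 hσ))
    (mul_nonneg k.cast_nonneg (longestEdge_nonneg v))

end
end

section
/- Let σ = {v_0,…,v_n} and σ̃ = {ṽ_0,…,ṽ_n} be two Euclidean n-simplices in ℝ^n such that | ‖ṽ_i − ṽ_j‖ − ‖v_i − v_j‖ | ≤ C_0 L(σ) for all i < j, with C_0 ≤ 2/3. Let A : ℝ^n → ℝ^n be the affine map with A(v_i) = ṽ_i for all i. Then for all x, y ∈ ℝ^n, | ‖A(x) − A(y)‖ − ‖x − y‖ | ≤ η ‖x − y‖ where η = 4 C_0 / Θ(σ)². -/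
/-!
Write `x - y = ∑ᵢ wᵢ eᵢ` in the edge basis `eᵢ = v_{i+1} - v₀` of `σ`. Since `A` maps edges of `σ` to
edges of `σ̃` and squared edge lengths differ by at most `(8/3) C₀ L²`, polarization bounds the
change of every Gram entry `⟪eᵢ, eⱼ⟫` by `4 C₀ L²`, hence
`|‖A x - A y‖² - ‖x - y‖²| ≤ 4 C₀ L² (∑ |wᵢ|)²`. Each coefficient is controlled by an altitude,
`|wᵢ| · h_{i+1} ≤ ‖x - y‖`, so `L ∑ |wᵢ| ≤ ‖x - y‖ / Θ(σ)`. Finally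
`|t - s| (t + s) = |t² - s²|` turns the bound on squares into one on distances.
-/

noncomputable section

open Metric Matrix

open RealInnerProductSpace

section InnerProductSpace

variable {E F : Type*} [NormedAddCommGroup E] [InnerProductSpace ℝ E]
  [NormedAddCommGroup F] [InnerProductSpace ℝ F]

lemma real_inner_sub_sub_sub_eq (p q r : E) :
    ⟪p - r, q - r⟫ = (dist p r ^ 2 + dist q r ^ 2 - dist p q ^ 2) / 2 := by
  rw [real_inner_eq_norm_mul_self_add_norm_mul_self_sub_norm_sub_mul_self_div_two,
    sub_sub_sub_cancel_right]
  simp only [dist_eq_norm, sq]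

lemma norm_sum_smul_sq {ι : Type*} [Fintype ι] (w : ι → ℝ) (u : ι → E) :
    ‖∑ i, w i • u i‖ ^ 2 = ∑ i, ∑ j, w i * w j * ⟪u i, u j⟫ := by
  simp only [← real_inner_self_eq_norm_sq, sum_inner, inner_sum, real_inner_smul_left,
    real_inner_smul_right, mul_assoc]
  exact Finset.sum_congr rfl fun i _ => Finset.sum_congr rfl fun j _ => by rw [real_inner_comm]

lemma abs_inner_sub_inner_le_of_abs_dist_sq_sub_le {ι : Type*} (v : ι → E) (vt : ι → F) {ε : ℝ}
    (h : ∀ a b, |dist (vt a) (vt b) ^ 2 - dist (v a) (v b) ^ 2| ≤ ε) (a b c : ι) :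
    |⟪vt a - vt c, vt b - vt c⟫ - ⟪v a - v c, v b - v c⟫| ≤ 3 / 2 * ε := by
  rw [real_inner_sub_sub_sub_eq, real_inner_sub_sub_sub_eq]
  have hac := abs_le.mp (h a c)
  have hbc := abs_le.mp (h b c)
  have hab := abs_le.mp (h a b)
  rw [abs_le]
  constructor <;> linarith

lemma abs_norm_sum_smul_sq_sub_le {ι : Type*} [Fintype ι] (f : ι → E) (g : ι → F) (w : ι → ℝ)
    {δ : ℝ} (h : ∀ i j, |⟪g i, g j⟫ - ⟪f i, f j⟫| ≤ δ) :
    |‖∑ i, w i • g i‖ ^ 2 - ‖∑ i, w i • f i‖ ^ 2| ≤ δ * (∑ i, |w i|) ^ 2 := by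
  rw [norm_sum_smul_sq, norm_sum_smul_sq]
  calc |∑ i, ∑ j, w i * w j * ⟪g i, g j⟫ - ∑ i, ∑ j, w i * w j * ⟪f i, f j⟫|
      = |∑ i, ∑ j, w i * w j * (⟪g i, g j⟫ - ⟪f i, f j⟫)| := by
        simp only [mul_sub, Finset.sum_sub_distrib]
    _ ≤ ∑ i, ∑ j, |w i| * |w j| * δ := by
        refine (Finset.abs_sum_le_sum_abs _ _).trans (Finset.sum_le_sum fun i _ => ?_)
        refine (Finset.abs_sum_le_sum_abs _ _).trans (Finset.sum_le_sum fun j _ => ?_)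
        rw [abs_mul, abs_mul]
        exact mul_le_mul_of_nonneg_left (h i j) (by positivity)
    _ = δ * (∑ i, |w i|) ^ 2 := by
        rw [sq, Finset.sum_mul_sum, Finset.mul_sum]
        simp only [Finset.mul_sum]
        exact Finset.sum_congr rfl fun i _ => Finset.sum_congr rfl fun j _ => by ring

end InnerProductSpace

lemma abs_mul_infDist_le {E : Type*} [NormedAddCommGroup E] [NormedSpace ℝ E]
    {S : AffineSubspace ℝ E} {s d : E} (hs : s ∈ S) (hd : d ∈ S.direction) (p : E) (t : ℝ) :
    |t| * Metric.infDist p S ≤ ‖t • (p - s) + d‖ := by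
  rcases eq_or_ne t 0 with rfl | ht
  · simp
  have hmem : s - t⁻¹ • d ∈ S := by
    simpa [vadd_eq_add, neg_smul, ← sub_eq_neg_add] using
      AffineSubspace.vadd_mem_of_mem_direction (S.direction.smul_mem (-t⁻¹) hd) hs
  calc |t| * Metric.infDist p S ≤ |t| * dist p (s - t⁻¹ • d) :=
        mul_le_mul_of_nonneg_left (Metric.infDist_le_dist_of_mem hmem) (abs_nonneg t)
    _ = ‖t • (p - s) + d‖ := by
        rw [dist_eq_norm, ← Real.norm_eq_abs, ← norm_smul, smul_sub, smul_sub, smul_smul,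
          mul_inv_cancel₀ ht, one_smul]
        congr 1
        rw [smul_sub]
        abel

lemma abs_sq_sub_sq_le_of_abs_sub_le {a b δ L : ℝ} (ha : 0 ≤ a) (hb : 0 ≤ b) (hbL : b ≤ L)
    (h : |a - b| ≤ δ) : |a ^ 2 - b ^ 2| ≤ δ * (2 * L + δ) := by
  have hsum : a + b ≤ 2 * L + δ := by linarith [(abs_le.mp h).2]
  calc |a ^ 2 - b ^ 2| = |a - b| * (a + b) := by
        rw [← abs_of_nonneg (add_nonneg ha hb), ← abs_mul]
        ring_nf
    _ ≤ δ * (2 * L + δ) := mul_le_mul h hsum (by positivity) ((abs_nonneg _).trans h)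

lemma abs_sub_le_of_abs_sq_sub_sq_le {s t η : ℝ} (hs : 0 ≤ s) (ht : 0 ≤ t)
    (h : |t ^ 2 - s ^ 2| ≤ η * s ^ 2) : |t - s| ≤ η * s := by
  rcases hs.eq_or_lt with rfl | hs
  · have : t ^ 2 ≤ 0 := by simpa [abs_le] using h
    simp [le_antisymm (by nlinarith) ht]
  have hprod : |t - s| * (t + s) = |t ^ 2 - s ^ 2| := by
    rw [← abs_of_nonneg (add_nonneg ht hs.le), ← abs_mul]
    ring_nf
  nlinarith [abs_nonneg (t - s), mul_nonneg (abs_nonneg (t - s)) ht]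

lemma dist_le_longestEdge {m k : ℕ} (v : Fin (k + 1) → EuclideanSpace ℝ (Fin m)) (a b : Fin (k + 1)) :
    dist (v a) (v b) ≤ longestEdge v := by
  refine le_csSup ?_ ⟨a, b, rfl⟩
  refine ((Set.finite_range fun p : Fin (k + 1) × Fin (k + 1) => dist (v p.1) (v p.2)).subset
    ?_).bddAbove
  rintro d ⟨i, j, rfl⟩
  exact ⟨(i, j), rfl⟩

lemma exists_sum_smul_sub_eq {n : ℕ} {v : Fin (n + 1) → EuclideanSpace ℝ (Fin n)}
    (hv : AffineIndependent ℝ v) (u : EuclideanSpace ℝ (Fin n)) :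
    ∃ w : Fin n → ℝ, ∑ i, w i • (v i.succ - v 0) = u := by
  have hli : LinearIndependent ℝ fun i : Fin n => v i.succ - v 0 := by
    simpa [Function.comp_def, finSuccAboveEquiv_apply, vsub_eq_sub] using
      ((affineIndependent_iff_linearIndependent_vsub ℝ v 0).mp hv).comp _
        (finSuccAboveEquiv 0).injective
  rw [← Submodule.mem_span_range_iff_exists_fun,
    hli.span_eq_top_of_card_eq_finrank' (by simp)]
  exact Submodule.mem_top

section Simplex

variable {m k : ℕ} {v : Fin (k + 1) → EuclideanSpace ℝ (Fin m)}

lemma longestEdge_pos (hv : AffineIndependent ℝ v) (hk : k ≠ 0) : 0 < longestEdge v := by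
  have h01 : (0 : Fin (k + 1)) ≠ 1 := by simp [Fin.ext_iff, Nat.mod_eq_of_lt, hk]
  exact (dist_pos.mpr (hv.injective.ne h01)).trans_le (dist_le_longestEdge v 0 1)

lemma altitude_pos (hv : AffineIndependent ℝ v) (hk : k ≠ 0) (i : Fin (k + 1)) :
    0 < altitude v i := by
  have : Nontrivial (Fin (k + 1)) := Fin.nontrivial_iff_two_le.mpr (by omega)
  obtain ⟨j, hj⟩ := exists_ne i
  have hout : v i ∉ affineSpan ℝ (v '' {j | j ≠ i}) := by
    simpa [Set.sdiff_eq, Set.compl_def] using hv.notMem_affineSpan_sdiff i Set.univ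
  have hne : (affineSpan ℝ (v '' {j | j ≠ i}) : Set (EuclideanSpace ℝ (Fin m))).Nonempty :=
    ⟨v j, subset_affineSpan ℝ _ ⟨j, hj, rfl⟩⟩
  exact ((AffineSubspace.closed_of_finiteDimensional _).notMem_iff_infDist_pos hne).mp hout

lemma thickness_mul_longestEdge (hv : AffineIndependent ℝ v) (hk : k ≠ 0) :
    thickness v * longestEdge v = sInf (Set.range (altitude v)) / k := by
  rw [thickness, if_neg hk]
  field_simp [(longestEdge_pos hv hk).ne']

lemma thickness_pos (hv : AffineIndependent ℝ v) (hk : k ≠ 0) : 0 < thickness v := by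
  obtain ⟨i, hi⟩ := (Set.range_nonempty (altitude v)).csInf_mem (Set.finite_range _)
  rw [thickness, if_neg hk, ← hi]
  exact div_pos (altitude_pos hv hk i)
    (mul_pos (by positivity) (longestEdge_pos hv hk))

lemma abs_mul_altitude_succ_le (w : Fin k → ℝ) (i : Fin k) :
    |w i| * altitude v i.succ ≤ ‖∑ j, w j • (v j.succ - v 0)‖ := by
  set S := affineSpan ℝ (v '' {j | j ≠ i.succ})
  have hvS : ∀ j, j ≠ i.succ → v j ∈ S := fun j hj => subset_affineSpan ℝ _ ⟨j, hj, rfl⟩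
  have hv0 : v 0 ∈ S := hvS 0 (Fin.succ_ne_zero i).symm
  have hd : ∑ j ∈ Finset.univ.erase i, w j • (v j.succ - v 0) ∈ S.direction := by
    refine Submodule.sum_mem _ fun j hj => Submodule.smul_mem _ _ ?_
    simpa [vsub_eq_sub] using AffineSubspace.vsub_mem_direction
      (hvS j.succ ((Fin.succ_injective _).ne (Finset.ne_of_mem_erase hj))) hv0
  rw [← Finset.add_sum_erase _ _ (Finset.mem_univ i)]
  exact abs_mul_infDist_le hv0 hd _ _

lemma sInf_altitude_mul_sum_abs_le (w : Fin k → ℝ) :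
    sInf (Set.range (altitude v)) * ∑ i, |w i| ≤ k * ‖∑ j, w j • (v j.succ - v 0)‖ := by
  rw [Finset.mul_sum]
  calc ∑ i, sInf (Set.range (altitude v)) * |w i|
      ≤ ∑ _i : Fin k, ‖∑ j, w j • (v j.succ - v 0)‖ := by
        refine Finset.sum_le_sum fun i _ => ?_
        rw [mul_comm]
        exact (mul_le_mul_of_nonneg_left (csInf_le (Set.finite_range _).bddBelow ⟨i.succ, rfl⟩)
          (abs_nonneg _)).trans (abs_mul_altitude_succ_le w i)
    _ = k * ‖∑ j, w j • (v j.succ - v 0)‖ := by simp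

lemma longestEdge_sq_mul_sum_abs_sq_le (hv : AffineIndependent ℝ v) (hk : k ≠ 0)
    (w : Fin k → ℝ) :
    longestEdge v ^ 2 * (∑ i, |w i|) ^ 2 ≤
      ‖∑ j, w j • (v j.succ - v 0)‖ ^ 2 / thickness v ^ 2 := by
  have hk' : (0 : ℝ) < k := by positivity
  have hθ := thickness_pos hv hk
  have hL := longestEdge_pos hv hk
  have hθL : thickness v * longestEdge v * ∑ i, |w i| ≤ ‖∑ j, w j • (v j.succ - v 0)‖ := by
    rw [thickness_mul_longestEdge hv hk, div_mul_eq_mul_div, div_le_iff₀ hk', mul_comm _ (k : ℝ)]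
    exact sInf_altitude_mul_sum_abs_le w
  rw [le_div_iff₀ (pow_pos hθ 2)]
  calc longestEdge v ^ 2 * (∑ i, |w i|) ^ 2 * thickness v ^ 2
      = (thickness v * longestEdge v * ∑ i, |w i|) ^ 2 := by ring
    _ ≤ _ := pow_le_pow_left₀ (by positivity) hθL 2

end Simplex

theorem affine_metric_distortion_general {n : ℕ}
    (v vt : Fin (n + 1) → EuclideanSpace ℝ (Fin n))
    (hv : AffineIndependent ℝ v)
    (C₀ : ℝ) (hC₀0 : 0 ≤ C₀) (hC₀ : C₀ ≤ 2 / 3)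
    (hdist : ∀ i j : Fin (n + 1), i < j →
      |dist (vt i) (vt j) - dist (v i) (v j)| ≤ C₀ * longestEdge v)
    (A : EuclideanSpace ℝ (Fin n) →ᵃ[ℝ] EuclideanSpace ℝ (Fin n))
    (hA : ∀ i, A (v i) = vt i) :
    ∀ x y : EuclideanSpace ℝ (Fin n),
      |dist (A x) (A y) - dist x y| ≤ 4 * C₀ / thickness v ^ 2 * dist x y := by
  intro x y
  rcases eq_or_ne n 0 with rfl | hn
  · simp [Subsingleton.elim x y]
  set L := longestEdge v
  have hL : 0 ≤ L := (longestEdge_pos hv hn).le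
  have hedge : ∀ a b, |dist (vt a) (vt b) - dist (v a) (v b)| ≤ C₀ * L := by
    intro a b
    rcases lt_trichotomy a b with h | rfl | h
    · exact hdist a b h
    · simpa using mul_nonneg hC₀0 hL
    · simpa only [dist_comm] using hdist b a h
  have hsq : ∀ a b, |dist (vt a) (vt b) ^ 2 - dist (v a) (v b) ^ 2| ≤ 8 / 3 * C₀ * L ^ 2 :=
    fun a b => (abs_sq_sub_sq_le_of_abs_sub_le dist_nonneg dist_nonneg
      (dist_le_longestEdge v a b) (hedge a b)).trans
      (by nlinarith [mul_le_mul_of_nonneg_left hC₀ (mul_nonneg hC₀0 (sq_nonneg L))])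
  obtain ⟨w, hw⟩ := exists_sum_smul_sub_eq hv (x - y)
  have hAw : A x - A y = ∑ i, w i • (vt i.succ - vt 0) := by
    rw [← vsub_eq_sub, ← A.linearMap_vsub, vsub_eq_sub, ← hw, map_sum]
    simp only [map_smul, ← vsub_eq_sub, A.linearMap_vsub, hA]
  have hquad := abs_norm_sum_smul_sq_sub_le _ _ w fun i j =>
    abs_inner_sub_inner_le_of_abs_dist_sq_sub_le v vt hsq i.succ j.succ 0
  rw [← hAw, hw] at hquad
  rw [dist_eq_norm, dist_eq_norm]
  refine abs_sub_le_of_abs_sq_sub_sq_le (norm_nonneg _) (norm_nonneg _) ?_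
  calc _ ≤ 3 / 2 * (8 / 3 * C₀ * L ^ 2) * (∑ i, |w i|) ^ 2 := hquad
    _ = 4 * C₀ * (L ^ 2 * (∑ i, |w i|) ^ 2) := by ring
    _ ≤ 4 * C₀ * (‖x - y‖ ^ 2 / thickness v ^ 2) := by
        rw [← hw]
        exact mul_le_mul_of_nonneg_left (longestEdge_sq_mul_sum_abs_sq_le hv hn w) (by positivity)
    _ = _ := by ring

/-- **Linear distortion bound for affine maps between simplices.** -/
theorem affine_metric_distortion {n : ℕ}
    (v vt : Fin (n + 1) → EuclideanSpace ℝ (Fin n))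
    (hv : AffineIndependent ℝ v) (hvt : AffineIndependent ℝ vt)
    (C₀ : ℝ) (hC₀0 : 0 ≤ C₀) (hC₀ : C₀ ≤ 2 / 3)
    (hdist : ∀ i j : Fin (n + 1), i < j →
      |dist (vt i) (vt j) - dist (v i) (v j)| ≤ C₀ * longestEdge v)
    (A : EuclideanSpace ℝ (Fin n) →ᵃ[ℝ] EuclideanSpace ℝ (Fin n))
    (hA : ∀ i, A (v i) = vt i) :
    ∀ x y : EuclideanSpace ℝ (Fin n),
      |dist (A x) (A y) - dist x y| ≤ 4 * C₀ / thickness v ^ 2 * dist x y :=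
  affine_metric_distortion_general v vt hv C₀ hC₀0 hC₀ hdist A hA

end
end

section
/- For any Euclidean j-simplex σ, the fatness and thickness satisfy Θ(σ)^j ≤ Γ(σ) ≤ Θ(σ)/(j−1)!, where Γ(σ) = vol_j(σ)/L(σ)^j is the fatness and Θ(σ) is the thickness. -/
noncomputable section

open Metric Matrix

/-- The `j`-dimensional volume of the simplex with vertices `v`, computed as
`√(det Gram)/j!` where `Gram` is the Gram matrix of the edge vectors from `v 0`. -/
def simVol {m j : ℕ} (v : Fin (j + 1) → EuclideanSpace ℝ (Fin m)) : ℝ :=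
  Real.sqrt (Matrix.det (Matrix.of fun i l : Fin j =>
    (inner ℝ (v i.succ - v 0) (v l.succ - v 0) : ℝ))) / (Nat.factorial j)

/-!
With `e i = v (i + 1) - v 0` the volume is `√(det (gram e)) / j!`. Splitting `e 0` into its
projection onto the span of the other edges plus an orthogonal part gives the base-times-height
recursion `√(det (gram e)) = dist (e 0, span (e 1, …)) * √(det (gram (e 1, …)))`. Iterating
it, every factor is at least the smallest altitude `a`, so `a ^ j ≤ j! vol`. The Gram
determinant does not depend on how the vertices are labelled, so the vertex realising `a` may be
placed right after `v 0`; then the first factor is `a` and Hadamard's inequality bounds the rest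
by `L ^ (j - 1)`, so `j! vol ≤ a L ^ (j - 1)`. With `j! ≤ j ^ j` these are the two inequalities.
-/

open Submodule

theorem Submodule.infDist_eq_norm_sub_starProjection {𝕜 E : Type*} [RCLike 𝕜]
    [NormedAddCommGroup E] [InnerProductSpace 𝕜 E] (K : Submodule 𝕜 E) [K.HasOrthogonalProjection]
    (x : E) : infDist x K = ‖x - K.starProjection x‖ := by
  rw [infDist_eq_iInf, starProjection_minimal]
  simp_rw [dist_eq_norm]
  rfl

namespace Matrix

theorem det_one_updateRow {n R : Type*} [Fintype n] [DecidableEq n] [CommRing R] (p : n)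
    (u : n → R) : ((1 : Matrix n n R).updateRow p u).det = u p := by
  convert det_updateRow_sum (1 : Matrix n n R) p u using 3
  · ext k
    simp [Finset.sum_apply, one_apply]
  · simp

theorem det_one_updateCol {n R : Type*} [Fintype n] [DecidableEq n] [CommRing R] (p : n)
    (u : n → R) : ((1 : Matrix n n R).updateCol p u).det = u p := by
  rw [← det_transpose, ← updateRow_transpose, transpose_one, det_one_updateRow]

variable {E : Type*} [NormedAddCommGroup E] [InnerProductSpace ℝ E]

theorem gram_sum_smul {ι κ : Type*} [Fintype ι] (e : ι → E) (A : Matrix ι κ ℝ) :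
    gram ℝ (fun j => ∑ i, A i j • e i) = Aᵀ * gram ℝ e * A := by
  ext j k
  simp only [gram_apply, sum_inner, inner_sum, real_inner_smul_left, real_inner_smul_right,
    mul_apply, transpose_apply, Finset.sum_mul]
  exact Finset.sum_congr rfl fun _ _ => Finset.sum_congr rfl fun _ _ => by ring

theorem det_gram_sum_smul {ι : Type*} [Fintype ι] [DecidableEq ι] (e : ι → E)
    (A : Matrix ι ι ℝ) : (gram ℝ fun j => ∑ i, A i j • e i).det = A.det ^ 2 * (gram ℝ e).det := by
  rw [gram_sum_smul, det_mul, det_mul, det_transpose]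
  ring

theorem det_gram_comp_equiv {ι : Type*} [Fintype ι] [DecidableEq ι] (e : ι → E) (σ : ι ≃ ι) :
    (gram ℝ (e ∘ σ)).det = (gram ℝ e).det :=
  det_submatrix_equiv_self σ (gram ℝ e)

theorem det_gram_cons_sub_sum {n : ℕ} (x : E) (t : Fin n → E) (c : Fin n → ℝ) :
    (gram ℝ (Fin.cons (x - ∑ l, c l • t l) t : Fin (n + 1) → E)).det
      = (gram ℝ (Fin.cons x t : Fin (n + 1) → E)).det := by
  set A : Matrix (Fin (n + 1)) (Fin (n + 1)) ℝ := (1 : Matrix _ _ ℝ).updateCol 0 (Fin.cons 1 (-c))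
  have hcols : (Fin.cons (x - ∑ l, c l • t l) t : Fin (n + 1) → E)
      = fun j => ∑ i, A i j • (Fin.cons x t : Fin (n + 1) → E) i := by
    funext j
    refine Fin.cases ?_ (fun j => ?_) j
    · simp [A, Fin.sum_univ_succ, sub_eq_add_neg]
    · simp [A, one_apply]
  rw [hcols, det_gram_sum_smul, det_one_updateCol, Fin.cons_zero, one_pow, one_mul]

theorem det_gram_cons_of_forall_inner_eq_zero {n : ℕ} {w : E} {t : Fin n → E}
    (h : ∀ l, inner ℝ w (t l) = 0) :
    (gram ℝ (Fin.cons w t : Fin (n + 1) → E)).det = ‖w‖ ^ 2 * (gram ℝ t).det := by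
  rw [det_succ_row_zero, Fin.sum_univ_succ, Finset.sum_eq_zero fun l _ => by simp [h]]
  simp only [Fin.val_zero, pow_zero, one_mul, add_zero, gram_apply, Fin.cons_zero,
    real_inner_self_eq_norm_sq, Fin.succAbove_zero]
  rfl

theorem det_gram_cons {n : ℕ} (x : E) (t : Fin n → E) :
    (gram ℝ (Fin.cons x t : Fin (n + 1) → E)).det
      = infDist x (span ℝ (Set.range t)) ^ 2 * (gram ℝ t).det := by
  set K := span ℝ (Set.range t)
  have : FiniteDimensional ℝ K := FiniteDimensional.span_of_finite ℝ (Set.finite_range t)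
  obtain ⟨c, hc⟩ := (mem_span_range_iff_exists_fun ℝ).mp (K.starProjection_apply_mem x)
  have horth : ∀ l, inner ℝ (x - K.starProjection x) (t l) = 0 := fun l =>
    (K.mem_orthogonal' _).mp (K.sub_starProjection_mem_orthogonal x) _ (subset_span ⟨l, rfl⟩)
  rw [← det_gram_cons_sub_sum x t c, hc, det_gram_cons_of_forall_inner_eq_zero horth,
    infDist_eq_norm_sub_starProjection]

theorem sqrt_det_gram_cons {n : ℕ} (x : E) (t : Fin n → E) :
    √(gram ℝ (Fin.cons x t : Fin (n + 1) → E)).det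
      = infDist x (span ℝ (Set.range t)) * √(gram ℝ t).det := by
  rw [det_gram_cons, Real.sqrt_mul (sq_nonneg _), Real.sqrt_sq infDist_nonneg]

theorem sqrt_det_gram_le_prod_norm {n : ℕ} (e : Fin n → E) : √(gram ℝ e).det ≤ ∏ i, ‖e i‖ := by
  induction n with
  | zero => simp
  | succ n ih =>
    cases e using Fin.consCases with
    | cons x t =>
      rw [sqrt_det_gram_cons, Fin.prod_univ_succ]
      simp only [Fin.cons_zero, Fin.cons_succ]
      gcongr
      · simpa using infDist_le_dist_of_mem (zero_mem (span ℝ (Set.range t))) (x := x)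
      · exact ih t

theorem pow_le_sqrt_det_gram {n : ℕ} (e : Fin n → E) {c : ℝ} (hc : 0 ≤ c)
    (h : ∀ i, c ≤ infDist (e i) (span ℝ (e '' {l | l ≠ i}))) : c ^ n ≤ √(gram ℝ e).det := by
  induction n with
  | zero => simp
  | succ n ih =>
    cases e using Fin.consCases with
    | cons x t =>
      rw [sqrt_det_gram_cons, pow_succ']
      have hx : Fin.cons x t '' {l | l ≠ 0} = Set.range t := by
        ext y
        simp [Fin.exists_fin_succ]
      refine mul_le_mul (hx ▸ h 0) (ih t fun i => (h i.succ).trans ?_) (by positivity)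
        infDist_nonneg
      refine infDist_le_infDist_of_subset (span_mono ?_) ⟨0, zero_mem _⟩
      rintro _ ⟨l, hl, rfl⟩
      exact ⟨l.succ, (Fin.succ_injective _).ne hl, Fin.cons_succ _ _ _⟩

end Matrix

section EdgeVectors

open Equiv

section AddCommGroup

variable {E : Type*} [AddCommGroup E]

def edgeVectors {n : ℕ} (v : Fin (n + 1) → E) (i : Fin n) : E := v i.succ - v 0

theorem edgeVectors_comp_swap_succ_succ {n : ℕ} (v : Fin (n + 1) → E) (p q : Fin n) :
    edgeVectors (v ∘ swap p.succ q.succ) = edgeVectors v ∘ swap p q := by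
  funext l
  simp [edgeVectors, (Fin.succ_injective n).map_swap,
    swap_apply_of_ne_of_ne (Fin.succ_ne_zero p).symm (Fin.succ_ne_zero q).symm]

theorem edgeVectors_comp_swap_zero_succ [Module ℝ E] {n : ℕ} (v : Fin (n + 1) → E) (p : Fin n) :
    edgeVectors (v ∘ swap 0 p.succ) = fun j =>
      ∑ i, (1 : Matrix (Fin n) (Fin n) ℝ).updateRow p (fun _ => -1) i j • edgeVectors v i := by
  -- rebased at `v (p + 1)`, the `j`-th edge is `e j - e p`, except `-e p` in slot `p`
  funext j
  by_cases hj : j = p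
  · subst hj
    simp [edgeVectors, updateRow_apply, one_apply, Finset.sum_ite, Finset.filter_eq']
  · simp [edgeVectors, updateRow_apply, one_apply, Finset.sum_ite, Finset.filter_eq', hj,
      swap_apply_of_ne_of_ne (Fin.succ_ne_zero j) ((Fin.succ_injective n).ne hj)]

end AddCommGroup

variable {E : Type*} [NormedAddCommGroup E] [InnerProductSpace ℝ E]

theorem det_gram_edgeVectors_comp_swap {n : ℕ} (v : Fin (n + 1) → E) (x y : Fin (n + 1)) :
    (gram ℝ (edgeVectors (v ∘ swap x y))).det = (gram ℝ (edgeVectors v)).det := by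
  have zero_succ : ∀ q : Fin n,
      (gram ℝ (edgeVectors (v ∘ swap 0 q.succ))).det = (gram ℝ (edgeVectors v)).det := by
    intro q
    rw [edgeVectors_comp_swap_zero_succ, det_gram_sum_smul, det_one_updateRow]
    ring
  cases x using Fin.cases with
  | zero =>
    cases y using Fin.cases with
    | zero => rw [swap_self, coe_refl, Function.comp_id]
    | succ q => exact zero_succ q
  | succ p =>
    cases y using Fin.cases with
    | zero => rw [Equiv.swap_comm]; exact zero_succ p
    | succ q => rw [edgeVectors_comp_swap_succ_succ, det_gram_comp_equiv]

theorem det_gram_edgeVectors_comp_perm {n : ℕ} (v : Fin (n + 1) → E) (σ : Perm (Fin (n + 1))) :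
    (gram ℝ (edgeVectors (v ∘ σ))).det = (gram ℝ (edgeVectors v)).det := by
  induction σ using Perm.swap_induction_on generalizing v with
  | one => rfl
  | swap_mul σ x y _ ih =>
    rw [Perm.coe_mul, ← Function.comp_assoc, ih, det_gram_edgeVectors_comp_swap]

end EdgeVectors

theorem AffineSubspace.infDist_eq_infDist_sub {E : Type*} [NormedAddCommGroup E] [NormedSpace ℝ E]
    {s : AffineSubspace ℝ E} {q : E} (hq : q ∈ s) (x : E) :
    infDist x s = infDist (x - q) s.direction := by
  have hs : (s : Set E) = (q + ·) '' s.direction := by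
    ext y
    rw [Set.mem_image]
    refine ⟨fun hy => ⟨y - q, (vsub_right_mem_direction_iff_mem hq y).mpr hy, by abel⟩, ?_⟩
    rintro ⟨d, hd, rfl⟩
    simpa [add_comm] using vadd_mem_of_mem_direction hd hq
  rw [hs, ← infDist_image (isometry_add_left q) (x := x - q), add_sub_cancel]

section Simplex

variable {m : ℕ}

local notation "𝔼" => EuclideanSpace ℝ (Fin m)

theorem altitude_succ {n : ℕ} (v : Fin (n + 1) → 𝔼) (i : Fin n) :
    altitude v i.succ = infDist (edgeVectors v i) (span ℝ (edgeVectors v '' {l | l ≠ i})) := by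
  have h0 : (0 : Fin (n + 1)) ∈ {s | s ≠ i.succ} := (Fin.succ_ne_zero i).symm
  rw [altitude,
    AffineSubspace.infDist_eq_infDist_sub (mem_affineSpan ℝ (Set.mem_image_of_mem v h0)),
    direction_affineSpan, vectorSpan_image_eq_span_vsub_set_right_ne ℝ v h0]
  congr 3
  ext y
  simp [Fin.exists_fin_succ, edgeVectors]

theorem altitude_comp_perm {n : ℕ} (v : Fin (n + 1) → 𝔼) (σ : Equiv.Perm (Fin (n + 1)))
    (i : Fin (n + 1)) : altitude (v ∘ σ) i = altitude v (σ i) := by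
  have hσ : σ '' {j | j ≠ i} = {j | j ≠ σ i} := by
    ext j
    simp [Equiv.image_eq_preimage_symm, Equiv.symm_apply_eq]
  rw [altitude, altitude, Set.image_comp, hσ, Function.comp_apply]

theorem dist_le_longestEdge_s14 {n : ℕ} (v : Fin (n + 1) → 𝔼) (i l : Fin (n + 1)) :
    dist (v i) (v l) ≤ longestEdge v := by
  have hfin : {d : ℝ | ∃ i j, d = dist (v i) (v j)}.Finite :=
    (Set.finite_range fun p : Fin (n + 1) × Fin (n + 1) => dist (v p.1) (v p.2)).subset
      (by rintro _ ⟨i, j, rfl⟩; exact ⟨(i, j), rfl⟩)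
  exact le_csSup hfin.bddAbove ⟨i, l, rfl⟩

theorem pow_le_sqrt_det_gram_edgeVectors {n : ℕ} (v : Fin (n + 1) → 𝔼) {c : ℝ} (hc : 0 ≤ c)
    (h : ∀ i, c ≤ altitude v i) : c ^ n ≤ √(gram ℝ (edgeVectors v)).det :=
  pow_le_sqrt_det_gram _ hc fun i => (h i.succ).trans_eq (altitude_succ v i)

theorem sqrt_det_gram_edgeVectors_le_altitude_mul {n : ℕ} (v : Fin (n + 2) → 𝔼)
    (i : Fin (n + 2)) {D : ℝ} (hD : ∀ k l, dist (v k) (v l) ≤ D) :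
    √(gram ℝ (edgeVectors v)).det ≤ altitude v i * D ^ n := by
  -- relabel so that vertex `i` becomes vertex `1`
  rw [← det_gram_edgeVectors_comp_perm v (Equiv.swap 1 i),
    ← Equiv.swap_apply_left 1 i, ← altitude_comp_perm]
  set w := v ∘ Equiv.swap 1 i
  set e := edgeVectors w
  have htail : Set.range (Fin.tail e) = e '' {l | l ≠ 0} := by
    ext y
    simp [Fin.exists_fin_succ, Fin.tail]
  calc √(gram ℝ e).det
        = infDist (e 0) (span ℝ (Set.range (Fin.tail e))) * √(gram ℝ (Fin.tail e)).det := by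
        rw [← sqrt_det_gram_cons (e 0) (Fin.tail e), Fin.cons_self_tail]
    _ ≤ altitude w 1 * ∏ l, ‖Fin.tail e l‖ := by
        rw [show (1 : Fin (n + 2)) = Fin.succ 0 from rfl, altitude_succ, htail]
        exact mul_le_mul_of_nonneg_left (sqrt_det_gram_le_prod_norm _) infDist_nonneg
    _ ≤ altitude w 1 * D ^ n := by
        gcongr
        · exact infDist_nonneg
        · calc ∏ l, ‖Fin.tail e l‖ ≤ ∏ _l : Fin n, D :=
                Finset.prod_le_prod (fun _ _ => norm_nonneg _) fun l _ =>
                  (dist_eq_norm _ _).symm.trans_le (hD _ _)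
            _ = D ^ n := by simp

end Simplex

theorem fatness_thickness_of_bounds {k : ℕ} {a g L : ℝ} (ha : 0 ≤ a) (hL : 0 ≤ L)
    (hlow : a ^ (k + 1) ≤ g) (hup : g ≤ a * L ^ k) :
    (a / ((k + 1 : ℕ) * L)) ^ (k + 1) ≤ g / (k + 1).factorial / L ^ (k + 1) ∧
      g / (k + 1).factorial / L ^ (k + 1) ≤ a / ((k + 1 : ℕ) * L) / k.factorial := by
  -- for `L = 0` every quotient is the junk value `0`
  rcases hL.eq_or_lt with rfl | hL
  · simp
  have hfac : ((k + 1).factorial : ℝ) ≤ ((k + 1 : ℕ) : ℝ) ^ (k + 1) := by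
    exact_mod_cast Nat.factorial_le_pow (k + 1)
  have hg : 0 ≤ g := (pow_nonneg ha _).trans hlow
  constructor
  · rw [div_div, div_pow, mul_pow]
    gcongr
  · calc g / (k + 1).factorial / L ^ (k + 1) ≤ a * L ^ k / (k + 1).factorial / L ^ (k + 1) := by
          gcongr
      _ = a / ((k + 1 : ℕ) * L) / k.factorial := by
          push_cast [Nat.factorial_succ]
          field_simp
          ring

theorem fatness_thickness_general {m j : ℕ}
    (v : Fin (j + 1) → EuclideanSpace ℝ (Fin m)) :
    thickness v ^ j ≤ simVol v / longestEdge v ^ j ∧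
    simVol v / longestEdge v ^ j ≤ thickness v / (Nat.factorial (j - 1)) := by
  cases j with
  | zero => simp [thickness, simVol]
  | succ k =>
    obtain ⟨i₀, hi₀⟩ : sInf (Set.range (altitude v)) ∈ Set.range (altitude v) :=
      (Set.range_nonempty _).csInf_mem (Set.finite_range _)
    have hmin : ∀ i, sInf (Set.range (altitude v)) ≤ altitude v i := fun i =>
      csInf_le (Set.finite_range _).bddBelow ⟨i, rfl⟩
    have ha : 0 ≤ sInf (Set.range (altitude v)) := hi₀ ▸ infDist_nonneg
    have hlow := pow_le_sqrt_det_gram_edgeVectors v ha hmin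
    have hup := hi₀ ▸ sqrt_det_gram_edgeVectors_le_altitude_mul v i₀ (dist_le_longestEdge_s14 v)
    rw [thickness, if_neg k.succ_ne_zero, Nat.add_sub_cancel]
    exact fatness_thickness_of_bounds ha ((dist_le_longestEdge_s14 v 0 0).trans' dist_nonneg) hlow hup

/-- **Fatness and thickness.**  For any `j`-simplex (`j ≥ 1`),
`Θ(σ)^j ≤ Γ(σ) ≤ Θ(σ)/(j-1)!` where `Γ(σ) = vol_j(σ)/L(σ)^j`. -/
theorem fatness_thickness {m j : ℕ} (hj : 1 ≤ j)
    (v : Fin (j + 1) → EuclideanSpace ℝ (Fin m)) (hv : AffineIndependent ℝ v) :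
    thickness v ^ j ≤ simVol v / longestEdge v ^ j ∧
    simVol v / longestEdge v ^ j ≤ thickness v / (Nat.factorial (j - 1)) :=
  fatness_thickness_general v

end
end

section
/- In the hyperbolic plane of constant curvature −1/k², consider a geodesic triangle (hinge) with two sides of lengths a, b ≤ d/2 meeting at angle γ, where d/k < 1/2. Let c be the length of the third side, determined by the hyperbolic cosine rule cosh(c/k) = cosh(a/k)cosh(b/k) − sinh(a/k)sinh(b/k)cos γ. Then c² = a² + b² − 2ab·cos γ + E′ with |E′| ≤ 5 d⁴/k². -/
set_option maxHeartbeats 1000000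

lemma exp_taylor4 (u : ℝ) (h : |u| ≤ 1) :
    |Real.exp u - (1 + u + u^2/2 + u^3/6)| ≤ |u|^4 * (5/96) := by
  have := Real.exp_bound h (n := 4) (by norm_num)
  norm_num [Finset.sum_range_succ, Nat.factorial] at this
  convert this using 2

lemma cosh_taylor (u : ℝ) (h : |u| ≤ 1) :
    |Real.cosh u - (1 + u^2/2)| ≤ u^4 * (5/96) := by
  have h1 := exp_taylor4 u h
  have h2 := exp_taylor4 (-u) (by rwa [abs_neg])
  rw [abs_neg] at h2
  have hu4 : |u|^4 = u^4 := by rw [← abs_pow, abs_of_nonneg (by positivity)]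
  rw [hu4] at h1 h2
  rw [Real.cosh_eq, abs_le] at *
  constructor <;> nlinarith [h1.1, h1.2, h2.1, h2.2]

lemma sinh_taylor (u : ℝ) (h0 : 0 ≤ u) (h : u ≤ 1) :
    |Real.sinh u - u| ≤ u^3 * (1/4) := by
  have hu : |u| ≤ 1 := by rwa [abs_of_nonneg h0]
  have h1 := exp_taylor4 u hu
  have h2 := exp_taylor4 (-u) (by rwa [abs_neg])
  rw [abs_neg] at h2
  have hu4 : |u|^4 = u^4 := by rw [← abs_pow, abs_of_nonneg (by positivity)]
  rw [hu4] at h1 h2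
  have h43 : u^4 ≤ u^3 := by nlinarith [mul_nonneg (pow_nonneg h0 3) (sub_nonneg.mpr h)]
  rw [Real.sinh_eq, abs_le] at *
  constructor <;> nlinarith [h1.1, h1.2, h2.1, h2.2]

lemma hinge_aux (x y t δ g : ℝ) (hx0 : 0 ≤ x) (hx : x ≤ δ/2) (hy0 : 0 ≤ y) (hy : y ≤ δ/2)
    (hδ0 : 0 < δ) (hδ : δ < 1/2) (ht0 : 0 ≤ t) (hg : |g| ≤ 1)
    (hrule : Real.cosh t = Real.cosh x * Real.cosh y - Real.sinh x * Real.sinh y * g) :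
    |t^2 - (x^2 + y^2 - 2*x*y*g)| ≤ 5*δ^4 := by
  have hg1 : -1 ≤ g := (abs_le.mp hg).1
  have hg2 : g ≤ 1 := (abs_le.mp hg).2
  have hx1 : x ≤ 1/4 := by linarith
  have hy1 : y ≤ 1/4 := by linarith
  have hsx : 0 ≤ Real.sinh x := by
    rw [← Real.sinh_zero]; exact Real.sinh_le_sinh.mpr hx0
  have hsy : 0 ≤ Real.sinh y := by
    rw [← Real.sinh_zero]; exact Real.sinh_le_sinh.mpr hy0
  -- t ≤ x + y
  have hcosh_le : Real.cosh t ≤ Real.cosh (x + y) := by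
    rw [Real.cosh_add, hrule]
    have hp : 0 ≤ Real.sinh x * Real.sinh y * (1 + g) :=
      mul_nonneg (mul_nonneg hsx hsy) (by linarith only [hg1])
    linarith only [hp]
  have ht : t ≤ x + y := by
    have := Real.cosh_le_cosh.mp hcosh_le
    rwa [abs_of_nonneg ht0, abs_of_nonneg (by linarith : (0:ℝ) ≤ x + y)] at this
  have htδ : t ≤ δ := by linarith
  -- Taylor remainders
  obtain ⟨A, hAdef, hAbd⟩ : ∃ A, Real.cosh x = 1 + x^2/2 + A ∧ |A| ≤ x^4*(5/96) :=
    ⟨_, by ring, cosh_taylor x (by rw [abs_of_nonneg hx0]; linarith)⟩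
  obtain ⟨B, hBdef, hBbd⟩ : ∃ B, Real.cosh y = 1 + y^2/2 + B ∧ |B| ≤ y^4*(5/96) :=
    ⟨_, by ring, cosh_taylor y (by rw [abs_of_nonneg hy0]; linarith)⟩
  obtain ⟨C, hCdef, hCbd⟩ : ∃ C, Real.cosh t = 1 + t^2/2 + C ∧ |C| ≤ t^4*(5/96) :=
    ⟨_, by ring, cosh_taylor t (by rw [abs_of_nonneg ht0]; linarith)⟩
  obtain ⟨Sx, hSxdef, hSxbd⟩ : ∃ S, Real.sinh x = x + S ∧ |S| ≤ x^3*(1/4) :=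
    ⟨_, by ring, sinh_taylor x hx0 (by linarith)⟩
  obtain ⟨Sy, hSydef, hSybd⟩ : ∃ S, Real.sinh y = y + S ∧ |S| ≤ y^3*(1/4) :=
    ⟨_, by ring, sinh_taylor y hy0 (by linarith)⟩
  rw [hAdef, hBdef, hCdef, hSxdef, hSydef] at hrule
  have key : t^2 - (x^2 + y^2 - 2*x*y*g) =
      x^2*y^2/2 + 2*A*(1+y^2/2) + 2*B*(1+x^2/2) + 2*A*B - 2*C
      - 2*g*(x*Sy + y*Sx + Sx*Sy) := by linear_combination 2*hrule
  -- power bounds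
  have hδ4pos : (0:ℝ) < δ^4 := by positivity
  have hδ2 : δ^2 ≤ 1/4 := by
    calc δ^2 ≤ (1/2:ℝ)^2 := pow_le_pow_left₀ hδ0.le hδ.le 2
    _ = 1/4 := by norm_num
  have hδ4 : δ^4 ≤ 1/16 := by
    calc δ^4 ≤ (1/2:ℝ)^4 := pow_le_pow_left₀ hδ0.le hδ.le 4
    _ = 1/16 := by norm_num
  have hδ6 : δ^6 ≤ δ^4/4 := by
    calc δ^6 = δ^4 * δ^2 := by ring
    _ ≤ δ^4 * (1/4) := mul_le_mul_of_nonneg_left hδ2 hδ4pos.le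
    _ = δ^4/4 := by ring
  have hx4 : x^4 ≤ δ^4/16 := by
    calc x^4 ≤ (δ/2)^4 := pow_le_pow_left₀ hx0 hx 4
    _ = δ^4/16 := by ring
  have hy4 : y^4 ≤ δ^4/16 := by
    calc y^4 ≤ (δ/2)^4 := pow_le_pow_left₀ hy0 hy 4
    _ = δ^4/16 := by ring
  have ht4 : t^4 ≤ δ^4 := pow_le_pow_left₀ ht0 htδ 4
  have hx3 : x^3 ≤ δ^3/8 := by
    calc x^3 ≤ (δ/2)^3 := pow_le_pow_left₀ hx0 hx 3
    _ = δ^3/8 := by ring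
  have hy3 : y^3 ≤ δ^3/8 := by
    calc y^3 ≤ (δ/2)^3 := pow_le_pow_left₀ hy0 hy 3
    _ = δ^3/8 := by ring
  have hx2b : x^2 ≤ δ^2/4 := by
    calc x^2 ≤ (δ/2)^2 := pow_le_pow_left₀ hx0 hx 2
    _ = δ^2/4 := by ring
  have hy2b : y^2 ≤ δ^2/4 := by
    calc y^2 ≤ (δ/2)^2 := pow_le_pow_left₀ hy0 hy 2
    _ = δ^2/4 := by ring
  -- remainder bounds in terms of δ
  have hA' : |A| ≤ δ^4/100 := by linarith only [hAbd, hx4, abs_nonneg A]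
  have hB' : |B| ≤ δ^4/100 := by linarith only [hBbd, hy4, abs_nonneg B]
  have hC' : |C| ≤ δ^4*(5/96) := by linarith only [hCbd, ht4, abs_nonneg C]
  have hSx' : |Sx| ≤ δ^3/32 := by linarith only [hSxbd, hx3, abs_nonneg Sx]
  have hSy' : |Sy| ≤ δ^3/32 := by linarith only [hSybd, hy3, abs_nonneg Sy]
  have hδ3pos : (0:ℝ) ≤ δ^3/32 := by positivity
  have hδ4' : (0:ℝ) ≤ δ^4/100 := by positivity
  -- term bounds
  have T1 : |x^2*y^2/2| ≤ δ^4/32 := by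
    rw [abs_of_nonneg (by positivity)]
    calc x^2*y^2/2 ≤ (δ^2/4)*(δ^2/4)/2 := by
          have := mul_le_mul hx2b hy2b (by positivity) (by positivity)
          linarith only [this]
    _ = δ^4/32 := by ring
  have T2 : |2*A*(1+y^2/2)| ≤ δ^4/25 := by
    rw [abs_mul, abs_mul, abs_two, abs_of_nonneg (by positivity : (0:ℝ) ≤ 1 + y^2/2)]
    calc 2* |A| *(1+y^2/2) ≤ 2*(δ^4/100)*2 := by
          have h1 : 1 + y^2/2 ≤ 2 := by linarith only [hy2b, hδ2]
          have := mul_le_mul (by linarith only [hA'] : 2* |A| ≤ 2*(δ^4/100)) h1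
            (by positivity) (by linarith only [hδ4'])
          linarith only [this]
    _ = δ^4/25 := by ring
  have T3 : |2*B*(1+x^2/2)| ≤ δ^4/25 := by
    rw [abs_mul, abs_mul, abs_two, abs_of_nonneg (by positivity : (0:ℝ) ≤ 1 + x^2/2)]
    calc 2* |B| *(1+x^2/2) ≤ 2*(δ^4/100)*2 := by
          have h1 : 1 + x^2/2 ≤ 2 := by linarith only [hx2b, hδ2]
          have := mul_le_mul (by linarith only [hB'] : 2* |B| ≤ 2*(δ^4/100)) h1
            (by positivity) (by linarith only [hδ4'])
          linarith only [this]
    _ = δ^4/25 := by ring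
  have T4 : |2*A*B| ≤ δ^4/50 := by
    rw [abs_mul, abs_mul, abs_two]
    have hB1 : |B| ≤ 1 := by linarith only [hB', hδ4]
    calc 2* |A| * |B| ≤ 2*(δ^4/100)*1 := by
          have := mul_le_mul (by linarith only [hA'] : 2* |A| ≤ 2*(δ^4/100)) hB1
            (abs_nonneg B) (by linarith only [hδ4'])
          linarith only [this]
    _ = δ^4/50 := by ring
  have T5 : |2*C| ≤ δ^4*(10/96) := by
    rw [abs_mul, abs_two]; linarith only [hC', abs_nonneg C]
  have TW1 : |x*Sy| ≤ δ^4/64 := by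
    rw [abs_mul, abs_of_nonneg hx0]
    calc x* |Sy| ≤ (δ/2)*(δ^3/32) := mul_le_mul hx hSy' (abs_nonneg Sy) (by linarith only [hδ0])
    _ = δ^4/64 := by ring
  have TW2 : |y*Sx| ≤ δ^4/64 := by
    rw [abs_mul, abs_of_nonneg hy0]
    calc y* |Sx| ≤ (δ/2)*(δ^3/32) := mul_le_mul hy hSx' (abs_nonneg Sx) (by linarith only [hδ0])
    _ = δ^4/64 := by ring
  have TW3 : |Sx*Sy| ≤ δ^4/64 := by
    rw [abs_mul]
    calc |Sx| * |Sy| ≤ (δ^3/32)*(δ^3/32) :=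
          mul_le_mul hSx' hSy' (abs_nonneg Sy) hδ3pos
    _ = δ^6/1024 := by ring
    _ ≤ δ^4/64 := by linarith only [hδ6, hδ4pos]
  have TW : |x*Sy + y*Sx + Sx*Sy| ≤ 3*(δ^4/64) := by
    calc |x*Sy + y*Sx + Sx*Sy| ≤ |x*Sy + y*Sx| + |Sx*Sy| := abs_add_le _ _
    _ ≤ |x*Sy| + |y*Sx| + |Sx*Sy| := by linarith only [abs_add_le (x*Sy) (y*Sx)]
    _ ≤ 3*(δ^4/64) := by linarith only [TW1, TW2, TW3]
  have T6 : |2*g*(x*Sy + y*Sx + Sx*Sy)| ≤ δ^4*(3/32) := by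
    rw [abs_mul, abs_mul, abs_two]
    calc 2* |g| * |x*Sy + y*Sx + Sx*Sy| ≤ 2*1*(3*(δ^4/64)) := by
          have := mul_le_mul (by linarith only [hg] : 2* |g| ≤ 2*1) TW
            (abs_nonneg _) (by norm_num)
          linarith only [this]
    _ = δ^4*(3/32) := by ring
  -- combine
  rw [key]
  have e1 := abs_le.mp T1
  have e2 := abs_le.mp T2
  have e3 := abs_le.mp T3
  have e4 := abs_le.mp T4
  have e5 := abs_le.mp T5
  have e6 := abs_le.mp T6
  rw [abs_le]
  constructor
  · linarith only [e1.1, e2.1, e3.1, e4.1, e5.2, e6.2, hδ4pos]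
  · linarith only [e1.2, e2.2, e3.2, e4.2, e5.1, e6.1, hδ4pos]

noncomputable section

/-- **Hyperbolic hinge estimate.**  In the hyperbolic plane of curvature `−1/k²`,
for a hinge with sides `a, b ≤ d/2` and angle `γ` (with `d/k < 1/2`), the length
`c` of the closing side, given by the hyperbolic cosine rule, satisfies
`c² = a² + b² − 2ab cos γ + E′` with `|E′| ≤ 5 d⁴/k²`. -/
theorem hyperbolic_hinge_estimate (k d a b γ c : ℝ)
    (hk : 0 < k) (hd : 0 < d) (hdk : d / k < 1 / 2)
    (ha0 : 0 ≤ a) (ha : a ≤ d / 2) (hb0 : 0 ≤ b) (hb : b ≤ d / 2)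
    (hγ0 : 0 ≤ γ) (hγ : γ ≤ Real.pi) (hc0 : 0 ≤ c)
    (hrule : Real.cosh (c / k) =
      Real.cosh (a / k) * Real.cosh (b / k) -
        Real.sinh (a / k) * Real.sinh (b / k) * Real.cos γ) :
    |c ^ 2 - (a ^ 2 + b ^ 2 - 2 * a * b * Real.cos γ)| ≤ 5 * d ^ 4 / k ^ 2 := by
  have hk' : k ≠ 0 := ne_of_gt hk
  have h := hinge_aux (a/k) (b/k) (c/k) (d/k) (Real.cos γ)
    (div_nonneg ha0 hk.le)
    (by calc a/k ≤ (d/2)/k := by gcongr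
        _ = (d/k)/2 := by ring)
    (div_nonneg hb0 hk.le)
    (by calc b/k ≤ (d/2)/k := by gcongr
        _ = (d/k)/2 := by ring)
    (div_pos hd hk) hdk (div_nonneg hc0 hk.le) (Real.abs_cos_le_one γ) hrule
  have e1 : c ^ 2 - (a ^ 2 + b ^ 2 - 2 * a * b * Real.cos γ) =
      k^2 * ((c/k)^2 - ((a/k)^2 + (b/k)^2 - 2*(a/k)*(b/k)*Real.cos γ)) := by
    field_simp
  rw [e1, abs_mul, abs_of_nonneg (by positivity : (0:ℝ) ≤ k^2)]
  calc k^2 * |(c/k)^2 - ((a/k)^2 + (b/k)^2 - 2*(a/k)*(b/k)*Real.cos γ)|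
      ≤ k^2 * (5*(d/k)^4) := by
        exact mul_le_mul_of_nonneg_left h (by positivity)
  _ = 5 * d ^ 4 / k ^ 2 := by field_simp

end
end

section
/- In the sphere of constant curvature 1/k², consider a hinge with two sides of lengths a, b ≤ d/2 meeting at angle γ, with d/k < 1/2. Let c be the length of the third side, determined by the spherical cosine rule cos(c/k) = cos(a/k)cos(b/k) + sin(a/k)sin(b/k)cos γ. Then c² = a² + b² − 2ab·cos γ + E′ with |E′| ≤ 5 d⁴/k². -/
/-!
Rescaling by `k` reduces to the unit sphere. There the cosine rule, rewritten as
`1 - cos c = (1 - cos (a - b)) + sin a sin b (1 - cos γ)`, differs from half the Euclidean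
law of cosines `((a - b)² + 2ab (1 - cos γ)) / 2` only through the Taylor remainders of
`cos (a - b)` and of `sin a sin b`, which are of fourth order in `d`. Hence `1 - cos c` is
small, so `c ≤ 1`, and inverting `1 - cos c ≈ c² / 2` costs another fourth-order term.
-/

namespace Real

lemma abs_mul_sub_sin_mul_sin_le {x y : ℝ} (hx : 0 ≤ x) (hy : 0 ≤ y) :
    |x * y - sin x * sin y| ≤ x * y * (x ^ 2 + y ^ 2) / 6 := by
  have hsx : |sin x| ≤ x := by simpa [abs_of_nonneg hx] using abs_sin_le_abs (x := x)
  have hsy : |sin y| ≤ y := by simpa [abs_of_nonneg hy] using abs_sin_le_abs (x := y)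
  have hx' : 0 ≤ x - sin x := sub_nonneg.2 (sin_le hx)
  have hy' : y - sin y ≤ y ^ 3 / 6 := by linarith [sin_ge_sub_cube hy]
  have hprod : sin x * sin y ≤ x * y :=
    calc sin x * sin y ≤ |sin x| * |sin y| := abs_mul (sin x) (sin y) ▸ le_abs_self _
      _ ≤ x * y := mul_le_mul hsx hsy (abs_nonneg _) hx
  -- `xy - sin x sin y = x (y - sin y) + sin y (x - sin x)`
  have hcross : sin y * (x - sin x) ≤ y * (x ^ 3 / 6) :=
    calc sin y * (x - sin x) ≤ |sin y| * (x - sin x) := by gcongr; exact le_abs_self _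
      _ ≤ y * (x ^ 3 / 6) := by gcongr; linarith [sin_ge_sub_cube hx]
  rw [abs_of_nonneg (sub_nonneg.2 hprod)]
  nlinarith [mul_le_mul_of_nonneg_left hy' hx]

lemma one_sub_cos_eq_of_spherical_cos_rule {x y γ t : ℝ}
    (hrule : cos t = cos x * cos y + sin x * sin y * cos γ) :
    1 - cos t = (1 - cos (x - y)) + sin x * sin y * (1 - cos γ) := by
  rw [hrule, cos_sub]; ring

lemma abs_one_sub_cos_sub_half_law_of_cosines_le {r x y γ t : ℝ} (hr : r ≤ 1)
    (hx0 : 0 ≤ x) (hx : x ≤ r) (hy0 : 0 ≤ y) (hy : y ≤ r)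
    (hrule : cos t = cos x * cos y + sin x * sin y * cos γ) :
    |(1 - cos t) - (x ^ 2 + y ^ 2 - 2 * x * y * cos γ) / 2| ≤ r ^ 4 := by
  have hxy : |x - y| ≤ r := abs_sub_le_iff.2 ⟨by linarith, by linarith⟩
  have hcos : |cos (x - y) - (1 - (x - y) ^ 2 / 2)| ≤ r ^ 4 * (5 / 96) :=
    (cos_bound (hxy.trans hr)).trans <| by gcongr
  have hsin : |(x * y - sin x * sin y) * (1 - cos γ)| ≤ r ^ 4 * (2 / 3) := by
    have hγ : |1 - cos γ| ≤ 2 := abs_le.2 ⟨by linarith [cos_le_one γ], by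
      linarith [neg_one_le_cos γ]⟩
    have hr0 : 0 ≤ r := hx0.trans hx
    have hxy4 : x * y * (x ^ 2 + y ^ 2) ≤ r * r * (r ^ 2 + r ^ 2) := by gcongr
    calc |(x * y - sin x * sin y) * (1 - cos γ)|
        ≤ x * y * (x ^ 2 + y ^ 2) / 6 * 2 := by
          rw [abs_mul]
          exact mul_le_mul (abs_mul_sub_sin_mul_sin_le hx0 hy0) hγ (abs_nonneg _)
            (by positivity)
      _ ≤ r ^ 4 * (2 / 3) := by nlinarith
  have hsplit : (1 - cos t) - (x ^ 2 + y ^ 2 - 2 * x * y * cos γ) / 2 =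
      -(cos (x - y) - (1 - (x - y) ^ 2 / 2)) - (x * y - sin x * sin y) * (1 - cos γ) := by
    rw [one_sub_cos_eq_of_spherical_cos_rule hrule]; ring
  rw [hsplit]
  calc _ ≤ |-(cos (x - y) - (1 - (x - y) ^ 2 / 2))| +
        |(x * y - sin x * sin y) * (1 - cos γ)| := abs_sub _ _
    _ ≤ r ^ 4 := by rw [abs_neg]; nlinarith [pow_nonneg ((abs_nonneg _).trans hxy) 4]

lemma abs_sq_sub_le_of_abs_one_sub_cos_sub_half_le {t q ε : ℝ} (ht : |t| ≤ 1)
    (h : |(1 - cos t) - q / 2| ≤ ε) : |t ^ 2 - q| ≤ 2 * ε + t ^ 4 * (5 / 48) := by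
  have hcos := cos_bound ht
  rw [pow_abs, abs_of_nonneg (by positivity : (0 : ℝ) ≤ t ^ 4)] at hcos
  have hsplit : t ^ 2 - q = 2 * ((1 - cos t) - q / 2) + 2 * (cos t - (1 - t ^ 2 / 2)) := by
    ring
  rw [hsplit]
  refine (abs_add_le _ _).trans ?_
  rw [abs_mul, abs_mul, abs_two]
  linarith

theorem abs_sq_sub_law_of_cosines_le_of_spherical_cos_rule {u x y γ t : ℝ} (hu : u < 1 / 2)
    (hx0 : 0 ≤ x) (hx : x ≤ u / 2) (hy0 : 0 ≤ y) (hy : y ≤ u / 2)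
    (ht0 : 0 ≤ t) (htπ : t ≤ π)
    (hrule : cos t = cos x * cos y + sin x * sin y * cos γ) :
    |t ^ 2 - (x ^ 2 + y ^ 2 - 2 * x * y * cos γ)| ≤ 5 * u ^ 4 := by
  have hu0 : 0 ≤ u := by linarith
  have hq : x ^ 2 + y ^ 2 - 2 * x * y * cos γ ≤ u ^ 2 := by
    nlinarith [neg_one_le_cos γ, mul_nonneg hx0 hy0]
  have hE := abs_one_sub_cos_sub_half_law_of_cosines_le (by linarith) hx0 hx hy0 hy hrule
  have hu2 : u ^ 2 ≤ 1 / 4 := by nlinarith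
  have hu4 : (u / 2) ^ 4 ≤ u ^ 2 / 64 := by nlinarith
  have ht1 : t ≤ 1 := by
    by_contra! h
    have : cos t < cos 1 := cos_lt_cos_of_nonneg_of_le_pi zero_le_one htπ h
    linarith [cos_one_le, (abs_le.1 hE).2]
  have hmain := abs_sq_sub_le_of_abs_one_sub_cos_sub_half_le
    (abs_le.2 ⟨by linarith, ht1⟩) hE
  have ht4 : t ^ 4 ≤ t ^ 2 := by nlinarith [pow_le_one₀ ht0 ht1 (n := 2)]
  have ht2 : t ^ 2 ≤ 2 * u ^ 2 := by linarith [(abs_le.1 hmain).2, sq_nonneg t, sq_nonneg u]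
  have ht44 : t ^ 4 ≤ 4 * u ^ 4 := by nlinarith [pow_le_pow_left₀ (sq_nonneg t) ht2 2]
  nlinarith [pow_nonneg hu0 4]

end Real

theorem spherical_hinge_estimate_general (k d a b γ c : ℝ)
    (hk : 0 < k) (hdk : d / k < 1 / 2)
    (ha0 : 0 ≤ a) (ha : a ≤ d / 2) (hb0 : 0 ≤ b) (hb : b ≤ d / 2)
    (hc0 : 0 ≤ c) (hc : c ≤ Real.pi * k)
    (hrule : Real.cos (c / k) =
      Real.cos (a / k) * Real.cos (b / k) +
        Real.sin (a / k) * Real.sin (b / k) * Real.cos γ) :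
    |c ^ 2 - (a ^ 2 + b ^ 2 - 2 * a * b * Real.cos γ)| ≤ 5 * d ^ 4 / k ^ 2 := by
  have hscaled := Real.abs_sq_sub_law_of_cosines_le_of_spherical_cos_rule hdk
    (div_nonneg ha0 hk.le) (by rw [div_right_comm]; gcongr)
    (div_nonneg hb0 hk.le) (by rw [div_right_comm]; gcongr)
    (div_nonneg hc0 hk.le) ((div_le_iff₀ hk).2 hc) hrule
  have hrescale :
      (c / k) ^ 2 - ((a / k) ^ 2 + (b / k) ^ 2 - 2 * (a / k) * (b / k) * Real.cos γ) =
        (c ^ 2 - (a ^ 2 + b ^ 2 - 2 * a * b * Real.cos γ)) / k ^ 2 := by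
    ring
  rw [hrescale, abs_div, abs_of_pos (pow_pos hk 2), div_le_iff₀ (pow_pos hk 2)] at hscaled
  exact hscaled.trans_eq (by field_simp)

/-- **Spherical hinge estimate.**  On the sphere of curvature `1/k²`, for a hinge
with sides `a, b ≤ d/2` and angle `γ` (with `d/k < 1/2`), the length `c` of the
closing side, given by the spherical cosine rule, satisfies
`c² = a² + b² − 2ab cos γ + E′` with `|E′| ≤ 5 d⁴/k²`. -/
theorem spherical_hinge_estimate (k d a b γ c : ℝ)
    (hk : 0 < k) (hd : 0 < d) (hdk : d / k < 1 / 2)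
    (ha0 : 0 ≤ a) (ha : a ≤ d / 2) (hb0 : 0 ≤ b) (hb : b ≤ d / 2)
    (hγ0 : 0 ≤ γ) (hγ : γ ≤ Real.pi) (hc0 : 0 ≤ c) (hc : c ≤ Real.pi * k)
    (hrule : Real.cos (c / k) =
      Real.cos (a / k) * Real.cos (b / k) +
        Real.sin (a / k) * Real.sin (b / k) * Real.cos γ) :
    |c ^ 2 - (a ^ 2 + b ^ 2 - 2 * a * b * Real.cos γ)| ≤ 5 * d ^ 4 / k ^ 2 :=
  spherical_hinge_estimate_general k d a b γ c hk hdk ha0 ha hb0 hb hc0 hc hrule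
end

section
/- If σ is a Θ₀-thick Euclidean n-simplex with vertex p, and τ is the facet opposite p, then any line through p that intersects the convex hull of τ makes an angle θ with the affine hull of τ satisfying sin θ ≥ n Θ₀. -/
noncomputable section

open Metric Matrix

/-- **Angle between a line through a vertex and the opposite facet of a thick
simplex.**  If `q` is a point of the facet opposite the vertex `v 0` of a
`Θ₀`-thick `n`-simplex, then the sine of the angle that the line through `v 0`
and `q` makes with the affine hull of the facet, namely
`a_{v 0} / dist (v 0) q`, is at least `n Θ₀`. -/
theorem thick_simplex_angle_bound {n : ℕ} (hn : 0 < n)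
    (v : Fin (n + 1) → EuclideanSpace ℝ (Fin n)) (hv : AffineIndependent ℝ v)
    (Θ₀ : ℝ) (hΘ₀ : 0 < Θ₀) (hthick : thickness v ≥ Θ₀)
    (q : EuclideanSpace ℝ (Fin n))
    (hq : q ∈ convexHull ℝ (Set.range fun i : Fin n => v i.succ)) :
    altitude v 0 / dist (v 0) q ≥ n * Θ₀ := by

  have hL_eq : {d : ℝ | ∃ i j, d = dist (v i) (v j)} =
      Set.range (fun p : Fin (n+1) × Fin (n+1) => dist (v p.1) (v p.2)) := by
    ext d; constructor
    · rintro ⟨i, j, rfl⟩; exact ⟨(i, j), rfl⟩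
    · rintro ⟨⟨i, j⟩, rfl⟩; exact ⟨i, j, rfl⟩
  have hbdd : BddAbove {d : ℝ | ∃ i j, d = dist (v i) (v j)} := by
    rw [hL_eq]; exact (Set.finite_range _).bddAbove
  set L := longestEdge v with hLdef
  have hmem : ∀ i j, dist (v i) (v j) ≤ L := fun i j =>
    le_csSup hbdd ⟨i, j, rfl⟩
  have hone : (0 : Fin (n+1)) ≠ ⟨1, by omega⟩ := by
    simp [Fin.ext_iff]
  have hL0 : 0 < L := lt_of_lt_of_le
    (dist_pos.2 (fun h => hone (hv.injective h))) (hmem 0 ⟨1, by omega⟩)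
  -- dist (v 0) q ≤ L
  have hdL : dist (v 0) q ≤ L := by
    have hsub : Set.range (fun i : Fin n => v i.succ) ⊆ Metric.closedBall (v 0) L := by
      rintro x ⟨i, rfl⟩
      simpa [Metric.mem_closedBall, dist_comm] using hmem 0 i.succ
    have := convexHull_min hsub (convex_closedBall _ _) hq
    simpa [Metric.mem_closedBall, dist_comm] using this
  -- q ≠ v 0
  have hrange_eq : (Set.range fun i : Fin n => v i.succ) = v '' {j | j ≠ 0} := by
    ext x; constructor
    · rintro ⟨i, rfl⟩; exact ⟨i.succ, Fin.succ_ne_zero i, rfl⟩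
    · rintro ⟨j, hj, rfl⟩
      obtain ⟨i, rfl⟩ := Fin.exists_succ_eq.2 hj
      exact ⟨i, rfl⟩
  have hne : q ≠ v 0 := by
    intro h
    have h1 : v 0 ∈ affineSpan ℝ (v '' {j | j ≠ 0}) := by
      have := convexHull_subset_affineSpan (Set.range fun i : Fin n => v i.succ) hq
      rw [hrange_eq] at this
      rwa [h] at this
    have h2 : v (0 : Fin (n+1)) ∉ affineSpan ℝ (v '' (Set.univ \ {0})) :=
      hv.notMem_affineSpan_diff 0 Set.univ
    apply h2
    have : (Set.univ \ {(0 : Fin (n+1))}) = {j | j ≠ 0} := by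
      ext j; simp
    rwa [this]
  have hd0 : 0 < dist (v 0) q := dist_pos.2 (fun h => hne h.symm)
  -- altitude bound
  have hbddb : BddBelow (Set.range (altitude v)) := by
    refine ⟨0, ?_⟩
    rintro x ⟨i, rfl⟩
    exact Metric.infDist_nonneg
  have hsle : sInf (Set.range (altitude v)) ≤ altitude v 0 :=
    csInf_le hbddb ⟨0, rfl⟩
  have hthick' : sInf (Set.range (altitude v)) / (n * L) ≥ Θ₀ := by
    have : thickness v = sInf (Set.range (altitude v)) / (n * L) := by
      rw [thickness, if_neg hn.ne']
    rwa [this] at hthick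
  have hnL : (0 : ℝ) < n * L := by positivity
  have halt : altitude v 0 ≥ Θ₀ * (n * L) := by
    have := (le_div_iff₀ hnL).1 hthick'
    linarith
  rw [ge_iff_le, le_div_iff₀ hd0]
  have h1 : (n:ℝ) * Θ₀ * dist (v 0) q ≤ Θ₀ * (n * L) :=by
    have := mul_le_mul_of_nonneg_left hdL (by positivity : (0:ℝ) ≤ (n:ℝ) * Θ₀)
    nlinarith
  linarith


end
end
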